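/- arXiv:1801.03635 — 7 statements merged into one kernel-verified Lean document; each statement's English description precedes it below -/
import Mathlib

section
/- Suppose there is a unique quantile q with P(γ(X) > q) = μ where μ = E[γ(X)]. Then the classification error of the quantile classifier h_q(x)=1{γ(x)>q} equals E_q = 2 E[γ(X) · 1{γ(X) ≤ q}]. -/
open MeasureTheory

/-- the classification error of the quantile classifier equals
`2 E[γ(X) 1{γ(X) ≤ q}]`. -/
theorem quantile_classifier_error
    {Ω 𝓧 : Type*} [MeasurableSpace Ω] [MeasurableSpace 𝓧]
    (P : Measure Ω) [IsProbabilityMeasure P]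
    (X : Ω → 𝓧) (hX : Measurable X)
    (γ : 𝓧 → ℝ) (hγ : Measurable γ) (hγ01 : ∀ x, γ x ∈ Set.Icc (0:ℝ) 1)
    (C : Ω → ℝ) (hC : Measurable C) (hCbin : ∀ ω, C ω = 0 ∨ C ω = 1)
    (hcond : ∀ B : Set 𝓧, MeasurableSet B →
      ∫ ω in X ⁻¹' B, C ω ∂P = ∫ ω in X ⁻¹' B, γ (X ω) ∂P)
    (μ q : ℝ) (hμ : μ = ∫ ω, γ (X ω) ∂P)
    (hq : P {ω | γ (X ω) > q} = ENNReal.ofReal μ) :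
    (P {ω | C ω ≠ (if γ (X ω) > q then (1:ℝ) else 0)}).toReal
      = 2 * ∫ ω, (if γ (X ω) ≤ q then γ (X ω) else 0) ∂P := by
  set A : Set Ω := {ω | γ (X ω) > q} with hAdef
  set D : Set Ω := {ω | C ω = 1} with hDdef
  have hA : MeasurableSet A := measurableSet_lt measurable_const (hγ.comp hX)
  have hD : MeasurableSet D := hC (measurableSet_singleton 1)
  have hCind : ∀ ω, C ω = D.indicator (fun _ => (1:ℝ)) ω := by
    intro ω
    rcases hCbin ω with h0 | h1
    · have : ω ∉ D := by simp [hDdef, h0]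
      simp [Set.indicator_of_notMem this, h0]
    · have : ω ∈ D := h1
      simp [Set.indicator_of_mem this, h1]
  -- integrability of γ ∘ X
  have hγX : Measurable fun ω => γ (X ω) := hγ.comp hX
  have Iγ : Integrable (fun ω => γ (X ω)) P := by
    refine (integrable_const (1:ℝ)).mono' hγX.aestronglyMeasurable ?_
    filter_upwards with ω
    have := hγ01 (X ω)
    rw [Real.norm_eq_abs, abs_le]
    constructor <;> linarith [this.1, this.2]
  -- set integrals of C are measures of intersections with D
  have hint : ∀ s : Set Ω, MeasurableSet s →
      ∫ ω in s, C ω ∂P = (P (D ∩ s)).toReal := by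
    intro s hs
    calc ∫ ω in s, C ω ∂P = ∫ ω in s, D.indicator (fun _ => (1:ℝ)) ω ∂P := by
          exact setIntegral_congr_fun hs (fun ω _ => hCind ω)
      _ = ∫ ω, D.indicator (fun _ => (1:ℝ)) ω ∂(P.restrict s) := rfl
      _ = ((P.restrict s) D).toReal := by
          rw [integral_indicator hD]; simp; rfl
      _ = (P (D ∩ s)).toReal := by rw [Measure.restrict_apply hD]
  -- use the conditional expectation hypothesis on B = {x | γ x > q} and its complement
  have hB : MeasurableSet {x | γ x > q} := measurableSet_lt measurable_const hγ
  have hpreA : X ⁻¹' {x | γ x > q} = A := rfl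
  have hpreAc : X ⁻¹' {x | γ x > q}ᶜ = Aᶜ := rfl
  have h1 : (P (D ∩ A)).toReal = ∫ ω in A, γ (X ω) ∂P := by
    rw [← hint A hA, ← hpreA]; exact hcond _ hB
  have h2 : (P (D ∩ Aᶜ)).toReal = ∫ ω in Aᶜ, γ (X ω) ∂P := by
    rw [← hint Aᶜ hA.compl, ← hpreAc]; exact hcond _ hB.compl
  -- mismatch set decomposition
  have hset : {ω | C ω ≠ (if γ (X ω) > q then (1:ℝ) else 0)} = (A \ D) ∪ (D \ A) := by
    ext ω
    rcases hCbin ω with h | h <;> by_cases hω : γ (X ω) > q <;>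
      simp [hAdef, hDdef, h, hω, Set.mem_diff]
  have hfin : ∀ s : Set Ω, P s ≠ ⊤ := fun s => (measure_lt_top P s).ne
  have hPsum : P ((A \ D) ∪ (D \ A)) = P (A \ D) + P (D \ A) :=
    measure_union (disjoint_sdiff_sdiff) (hD.diff hA)
  have hdiff1 : (P (A \ D)).toReal = (P A).toReal - (P (D ∩ A)).toReal := by
    have : A \ D = A \ (D ∩ A) := (Set.diff_inter_self_eq_diff).symm
    rw [this, measure_diff Set.inter_subset_right ((hD.inter hA).nullMeasurableSet)
        (hfin _), ENNReal.toReal_sub_of_le (measure_mono Set.inter_subset_right) (hfin _)]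
  have hdiff2 : (P (D \ A)).toReal = (P (D ∩ Aᶜ)).toReal := by
    congr 1
  -- P A in real
  have hμnonneg : 0 ≤ μ := by
    rw [hμ]; exact integral_nonneg fun ω => (hγ01 (X ω)).1
  have hPA : (P A).toReal = μ := by
    rw [hq, ENNReal.toReal_ofReal hμnonneg]
  -- split of μ
  have hsplit : μ = ∫ ω in A, γ (X ω) ∂P + ∫ ω in Aᶜ, γ (X ω) ∂P := by
    rw [hμ, ← integral_add_compl hA Iγ]
  -- rewrite RHS integrand as indicator
  have hRHS : ∫ ω, (if γ (X ω) ≤ q then γ (X ω) else 0) ∂P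
      = ∫ ω in Aᶜ, γ (X ω) ∂P := by
    rw [← integral_indicator hA.compl]
    congr 1
    ext ω
    by_cases hω : γ (X ω) ≤ q
    · rw [Set.indicator_of_mem (by simpa [hAdef] using not_lt.mpr hω)]
      simp [hω]
    · rw [Set.indicator_of_notMem (by simpa [hAdef] using not_le.mp hω)]
      simp [hω]
  rw [hset, hPsum, ENNReal.toReal_add (hfin _) (hfin _), hdiff1, hdiff2, h1, h2, hPA,
    hRHS]
  linarith [hsplit]
end

section
/- Suppose there is a unique quantile q with P(γ(X) > q) = μ where μ = E[γ(X)]. Then among all measurable classifiers h: X → {0,1} with E[h(X)] = μ, the quantile classifier h_q(x) = 1{γ(x) > q} minimizes the classification error P(C ≠ h(X)). -/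
open MeasureTheory Set

/-!
Because `γ (X)` is the conditional mean of `C` given `X`, the error of a `0/1`-valued classifier
`f` is `E[γ(X)] + E[f(X)] - 2 E[γ(X) f(X)]`. For calibrated classifiers the first two terms do not
depend on `f`, so it remains to maximise `E[γ(X) f(X)]` under the constraint `E[f(X)] = μ`. The
threshold rule `g = 1{γ > q}` does so by the bathtub principle: `(γ - q) f ≤ (γ - q) g` pointwise,
and integrating gives `E[γ f] - q μ ≤ E[γ g] - q μ`.
-/

lemma mem_Icc_of_eq_zero_or_eq_one {a : ℝ} (ha : a = 0 ∨ a = 1) : a ∈ Icc (0 : ℝ) 1 := by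
  rcases ha with rfl | rfl <;> norm_num

lemma norm_le_one_of_mem_Icc {a : ℝ} (ha : a ∈ Icc (0 : ℝ) 1) : ‖a‖ ≤ 1 := by
  rw [Real.norm_of_nonneg ha.1]
  exact ha.2

lemma sub_mul_le_sub_mul_ite_lt {y t : ℝ} (q : ℝ) (ht : t ∈ Icc (0 : ℝ) 1) :
    (y - q) * t ≤ (y - q) * if q < y then 1 else 0 := by
  obtain ⟨ht0, ht1⟩ := ht
  split_ifs with hy <;> nlinarith

lemma indicator_setOf_ne_eq {Ω : Type*} {C F : Ω → ℝ} (hC : ∀ ω, C ω = 0 ∨ C ω = 1)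
    (hF : ∀ ω, F ω = 0 ∨ F ω = 1) :
    {ω | C ω ≠ F ω}.indicator 1 = fun ω => C ω + F ω - 2 * (C ω * F ω) := by
  funext ω
  rcases hC ω with hCω | hCω <;> rcases hF ω with hFω | hFω <;> norm_num [hCω, hFω]

lemma mul_comp_eq_indicator_preimage {Ω 𝓧 : Type*} (Y : Ω → ℝ) (X : Ω → 𝓧) {f : 𝓧 → ℝ}
    (hf : ∀ x, f x = 0 ∨ f x = 1) :
    (fun ω => Y ω * f (X ω)) = (X ⁻¹' {x | f x = 1}).indicator Y := by
  funext ω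
  rcases hf (X ω) with hx | hx <;> simp [hx]

section

variable {Ω 𝓧 : Type*} [MeasurableSpace Ω] [MeasurableSpace 𝓧] {P : Measure Ω}

lemma integrable_of_mem_Icc [IsFiniteMeasure P] {F : Ω → ℝ} (hF : AEStronglyMeasurable F P)
    (hF01 : ∀ ω, F ω ∈ Icc (0 : ℝ) 1) : Integrable F P :=
  .of_bound hF 1 (ae_of_all _ fun ω => norm_le_one_of_mem_Icc (hF01 ω))

lemma integral_sub_const_mul [IsFiniteMeasure P] {Y K : Ω → ℝ} (q : ℝ) (hY : Integrable Y P)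
    (hK : AEStronglyMeasurable K P) (hK01 : ∀ ω, K ω ∈ Icc (0 : ℝ) 1) :
    ∫ ω, (Y ω - q) * K ω ∂P = ∫ ω, Y ω * K ω ∂P - q * ∫ ω, K ω ∂P := by
  have hbound : ∀ᵐ ω ∂P, ‖K ω‖ ≤ 1 := ae_of_all _ fun ω => norm_le_one_of_mem_Icc (hK01 ω)
  simp only [sub_mul]
  rw [integral_sub (hY.mul_bdd hK hbound) ((integrable_of_mem_Icc hK hK01).const_mul q),
    integral_const_mul]

theorem integral_mul_le_integral_mul_ite_lt [IsFiniteMeasure P] {Y H : Ω → ℝ} (q : ℝ)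
    (hYm : Measurable Y) (hY : Integrable Y P) (hH : AEStronglyMeasurable H P)
    (hH01 : ∀ ω, H ω ∈ Icc (0 : ℝ) 1)
    (hHG : ∫ ω, H ω ∂P = ∫ ω, (if q < Y ω then 1 else 0) ∂P) :
    ∫ ω, Y ω * H ω ∂P ≤ ∫ ω, Y ω * (if q < Y ω then 1 else 0) ∂P := by
  have hG : AEStronglyMeasurable (fun ω => if q < Y ω then (1 : ℝ) else 0) P :=
    (Measurable.ite (measurableSet_lt measurable_const hYm) measurable_const
      measurable_const).aestronglyMeasurable
  have hG01 : ∀ ω, (if q < Y ω then (1 : ℝ) else 0) ∈ Icc (0 : ℝ) 1 :=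
    fun ω => mem_Icc_of_eq_zero_or_eq_one (ite_eq_or_eq _ _ _).symm
  have hmono : ∫ ω, (Y ω - q) * H ω ∂P ≤ ∫ ω, (Y ω - q) * (if q < Y ω then 1 else 0) ∂P :=
    integral_mono
      ((hY.sub (integrable_const q)).mul_bdd hH
        (ae_of_all _ fun ω => norm_le_one_of_mem_Icc (hH01 ω)))
      ((hY.sub (integrable_const q)).mul_bdd hG
        (ae_of_all _ fun ω => norm_le_one_of_mem_Icc (hG01 ω)))
      fun ω => sub_mul_le_sub_mul_ite_lt q (hH01 ω)
  rw [integral_sub_const_mul q hY hH hH01, integral_sub_const_mul q hY hG hG01, hHG] at hmono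
  linarith

lemma measureReal_setOf_ne_eq [IsFiniteMeasure P] {C F : Ω → ℝ} (hC : Measurable C)
    (hF : Measurable F) (hCbin : ∀ ω, C ω = 0 ∨ C ω = 1) (hFbin : ∀ ω, F ω = 0 ∨ F ω = 1) :
    P.real {ω | C ω ≠ F ω} = ∫ ω, C ω ∂P + ∫ ω, F ω ∂P - 2 * ∫ ω, C ω * F ω ∂P := by
  have hS : MeasurableSet {ω | C ω ≠ F ω} := (measurableSet_eq_fun hC hF).compl
  have hCi : Integrable C P := integrable_of_mem_Icc hC.aestronglyMeasurable
    fun ω => mem_Icc_of_eq_zero_or_eq_one (hCbin ω)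
  have hFi : Integrable F P := integrable_of_mem_Icc hF.aestronglyMeasurable
    fun ω => mem_Icc_of_eq_zero_or_eq_one (hFbin ω)
  have hCFi : Integrable (fun ω => C ω * F ω) P := hCi.mul_bdd hF.aestronglyMeasurable
    (ae_of_all _ fun ω => norm_le_one_of_mem_Icc (mem_Icc_of_eq_zero_or_eq_one (hFbin ω)))
  calc P.real {ω | C ω ≠ F ω} = ∫ ω, C ω + F ω - 2 * (C ω * F ω) ∂P := by
        rw [← integral_indicator_one hS, indicator_setOf_ne_eq hCbin hFbin]
    _ = _ := by
      rw [integral_sub (f := fun ω => C ω + F ω) (hCi.add hFi) (hCFi.const_mul 2),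
        integral_add hCi hFi, integral_const_mul]

lemma integral_mul_comp_eq_of_setIntegral_preimage_eq {X : Ω → 𝓧} (hX : Measurable X)
    {Y Z : Ω → ℝ}
    (hYZ : ∀ B : Set 𝓧, MeasurableSet B → ∫ ω in X ⁻¹' B, Y ω ∂P = ∫ ω in X ⁻¹' B, Z ω ∂P)
    {f : 𝓧 → ℝ} (hf : Measurable f) (hfbin : ∀ x, f x = 0 ∨ f x = 1) :
    ∫ ω, Y ω * f (X ω) ∂P = ∫ ω, Z ω * f (X ω) ∂P := by
  have hB : MeasurableSet {x | f x = 1} := measurableSet_eq_fun hf measurable_const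
  rw [mul_comp_eq_indicator_preimage Y X hfbin, mul_comp_eq_indicator_preimage Z X hfbin,
    integral_indicator (hX hB), integral_indicator (hX hB)]
  exact hYZ _ hB

theorem measureReal_setOf_ne_comp_eq [IsFiniteMeasure P] {X : Ω → 𝓧} (hX : Measurable X)
    (γ : 𝓧 → ℝ) {C : Ω → ℝ} (hC : Measurable C) (hCbin : ∀ ω, C ω = 0 ∨ C ω = 1)
    (hcond : ∀ B : Set 𝓧, MeasurableSet B →
      ∫ ω in X ⁻¹' B, C ω ∂P = ∫ ω in X ⁻¹' B, γ (X ω) ∂P)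
    {f : 𝓧 → ℝ} (hf : Measurable f) (hfbin : ∀ x, f x = 0 ∨ f x = 1) :
    P.real {ω | C ω ≠ f (X ω)}
      = ∫ ω, γ (X ω) ∂P + ∫ ω, f (X ω) ∂P - 2 * ∫ ω, γ (X ω) * f (X ω) ∂P := by
  have hCγ : ∫ ω, C ω ∂P = ∫ ω, γ (X ω) ∂P := by
    simpa using hcond univ MeasurableSet.univ
  rw [measureReal_setOf_ne_eq (F := fun ω => f (X ω)) hC (hf.comp hX) hCbin
      (fun ω => hfbin (X ω)), hCγ,
    integral_mul_comp_eq_of_setIntegral_preimage_eq hX hcond hf hfbin]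

end

/-- among strength-calibrated classifiers (E[h(X)] = μ), the quantile
classifier h_q = 1{γ > q} minimizes classification error. -/
theorem quantile_classifier_optimal_among_calibrated
    {Ω 𝓧 : Type*} [MeasurableSpace Ω] [MeasurableSpace 𝓧]
    (P : Measure Ω) [IsProbabilityMeasure P]
    (X : Ω → 𝓧) (hX : Measurable X)
    (γ : 𝓧 → ℝ) (hγ : Measurable γ) (hγ01 : ∀ x, γ x ∈ Set.Icc (0:ℝ) 1)
    (C : Ω → ℝ) (hC : Measurable C) (hCbin : ∀ ω, C ω = 0 ∨ C ω = 1)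
    (hcond : ∀ B : Set 𝓧, MeasurableSet B →
      ∫ ω in X ⁻¹' B, C ω ∂P = ∫ ω in X ⁻¹' B, γ (X ω) ∂P)
    (μ q : ℝ) (hμ : μ = ∫ ω, γ (X ω) ∂P)
    (hq : P {ω | γ (X ω) > q} = ENNReal.ofReal μ)
    (h : 𝓧 → ℝ) (hh : Measurable h) (hhbin : ∀ x, h x = 0 ∨ h x = 1)
    (hcal : ∫ ω, h (X ω) ∂P = μ) :
    P {ω | C ω ≠ (if γ (X ω) > q then (1:ℝ) else 0)}
      ≤ P {ω | C ω ≠ h (X ω)} := by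
  have hg : Measurable fun x => if q < γ x then (1 : ℝ) else 0 :=
    Measurable.ite (measurableSet_lt measurable_const hγ) measurable_const measurable_const
  have hμ0 : 0 ≤ μ := hμ ▸ integral_nonneg fun ω => (hγ01 (X ω)).1
  have hg_cal : ∫ ω, (if q < γ (X ω) then (1 : ℝ) else 0) ∂P = μ := by
    have hS : MeasurableSet {ω | q < γ (X ω)} := measurableSet_lt measurable_const (hγ.comp hX)
    simpa [Set.indicator_apply, measureReal_def, hq, hμ0] using integral_indicator_one (μ := P) hS
  have hopt := integral_mul_le_integral_mul_ite_lt (Y := fun ω => γ (X ω))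
    (H := fun ω => h (X ω)) q (hγ.comp hX)
    (integrable_of_mem_Icc (hγ.comp hX).aestronglyMeasurable fun ω => hγ01 (X ω))
    (hh.comp hX).aestronglyMeasurable (fun ω => mem_Icc_of_eq_zero_or_eq_one (hhbin (X ω)))
    (hcal.trans hg_cal.symm)
  have herr_g := measureReal_setOf_ne_comp_eq (P := P) hX γ hC hCbin hcond hg
    fun x => (ite_eq_or_eq _ _ _).symm
  have herr_h := measureReal_setOf_ne_comp_eq (P := P) hX γ hC hCbin hcond hh hhbin
  rw [← ENNReal.toReal_le_toReal (measure_ne_top _ _) (measure_ne_top _ _)]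
  simp only [← measureReal_def, gt_iff_lt]
  rw [herr_g, herr_h, hg_cal, hcal]
  linarith
end

section
/- Let h_s(X) ~ Bernoulli(γ(X)) given X (independently of C given X). Then h_s is both strength-calibrated and distribution-matched: P(h_s=1) = P(C=1) and P(X ∈ B | h_s=1) = P(X ∈ B | C=1) for every measurable set B. Conversely, any (possibly stochastic) classifier h satisfying both properties must satisfy P(h=1 | X) = γ(X) almost surely. -/
/-!
For a `{0,1}`-valued `g`, `∫_{X ∈ B} g = P(X ∈ B, g = 1)`. Hence `P(h_s = 1 | X) = γ(X)` and
`P(C = 1 | X) = γ(X)` give the same joint law `P(X ∈ B, h_s = 1) = P(X ∈ B, C = 1)`; taking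
`B = univ` is calibration and dividing is distribution matching. Conversely, matching and
calibration multiply back to that joint law, which is `P(h = 1 | X) = γ(X)` in integrated form.
-/

open MeasureTheory

section BinaryClassifier

variable {Ω : Type*} [MeasurableSpace Ω] (μ : Measure Ω)

lemma setIntegral_eq_measure_inter_of_zero_or_one {g : Ω → ℝ} (hg : Measurable g)
    (hg01 : ∀ ω, g ω = 0 ∨ g ω = 1) (s : Set Ω) :
    ∫ ω in s, g ω ∂μ = (μ (s ∩ {ω | g ω = 1})).toReal := by
  have hE : MeasurableSet {ω | g ω = 1} := hg (measurableSet_singleton 1)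
  have hg_eq : g = {ω | g ω = 1}.indicator 1 := by
    funext ω
    rcases hg01 ω with h | h <;> simp [h]
  conv_lhs => rw [hg_eq]
  rw [setIntegral_indicator hE]
  simp [Measure.real]

lemma measure_inter_eq_of_setIntegral_eq [IsFiniteMeasure μ] {g g' : Ω → ℝ}
    (hg : Measurable g) (hg01 : ∀ ω, g ω = 0 ∨ g ω = 1)
    (hg' : Measurable g') (hg'01 : ∀ ω, g' ω = 0 ∨ g' ω = 1) {s : Set Ω}
    (h : ∫ ω in s, g ω ∂μ = ∫ ω in s, g' ω ∂μ) :
    μ (s ∩ {ω | g ω = 1}) = μ (s ∩ {ω | g' ω = 1}) := by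
  rw [setIntegral_eq_measure_inter_of_zero_or_one μ hg hg01,
    setIntegral_eq_measure_inter_of_zero_or_one μ hg' hg'01] at h
  exact (ENNReal.toReal_eq_toReal_iff' (measure_ne_top _ _) (measure_ne_top _ _)).mp h

lemma toReal_measure_inter_eq_of_div_eq [IsFiniteMeasure μ] {s t u v : Set Ω}
    (hst : μ s = μ t)
    (h : (μ (u ∩ s)).toReal / (μ s).toReal = (μ (v ∩ t)).toReal / (μ t).toReal) :
    (μ (u ∩ s)).toReal = (μ (v ∩ t)).toReal := by
  rw [hst] at h
  by_cases ht : μ t = 0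
  · -- `h` reads `0 = 0` here; the joint probabilities vanish by monotonicity instead.
    have hu : μ (u ∩ s) = 0 := measure_mono_null Set.inter_subset_right (hst ▸ ht)
    have hv : μ (v ∩ t) = 0 := measure_mono_null Set.inter_subset_right ht
    rw [hu, hv]
  · exact (div_left_inj' (ENNReal.toReal_ne_zero.mpr ⟨ht, measure_ne_top μ t⟩)).mp h

end BinaryClassifier

theorem stochastic_classifier_calibrated_and_matched_general
    {Ω 𝓧 : Type*} [MeasurableSpace Ω] [MeasurableSpace 𝓧]
    (P : Measure Ω) [IsProbabilityMeasure P]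
    (X : Ω → 𝓧)
    (γ : 𝓧 → ℝ)
    (C : Ω → ℝ) (hC : Measurable C) (hCbin : ∀ ω, C ω = 0 ∨ C ω = 1)
    (hcond : ∀ B : Set 𝓧, MeasurableSet B →
      ∫ ω in X ⁻¹' B, C ω ∂P = ∫ ω in X ⁻¹' B, γ (X ω) ∂P)
    (hs : Ω → ℝ) (hhs : Measurable hs) (hhsbin : ∀ ω, hs ω = 0 ∨ hs ω = 1)
    (hhscond : ∀ B : Set 𝓧, MeasurableSet B →
      ∫ ω in X ⁻¹' B, hs ω ∂P = ∫ ω in X ⁻¹' B, γ (X ω) ∂P) :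
    (P {ω | hs ω = 1} = P {ω | C ω = 1}
      ∧ ∀ B : Set 𝓧, MeasurableSet B →
          (P (X ⁻¹' B ∩ {ω | hs ω = 1})).toReal / (P {ω | hs ω = 1}).toReal
            = (P (X ⁻¹' B ∩ {ω | C ω = 1})).toReal / (P {ω | C ω = 1}).toReal)
    ∧ (∀ h : Ω → ℝ, Measurable h → (∀ ω, h ω = 0 ∨ h ω = 1) →
        P {ω | h ω = 1} = P {ω | C ω = 1} →
        (∀ B : Set 𝓧, MeasurableSet B →
          (P (X ⁻¹' B ∩ {ω | h ω = 1})).toReal / (P {ω | h ω = 1}).toReal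
            = (P (X ⁻¹' B ∩ {ω | C ω = 1})).toReal / (P {ω | C ω = 1}).toReal) →
        ∀ B : Set 𝓧, MeasurableSet B →
          ∫ ω in X ⁻¹' B, h ω ∂P = ∫ ω in X ⁻¹' B, γ (X ω) ∂P) := by
  have hjoint : ∀ B : Set 𝓧, MeasurableSet B →
      P (X ⁻¹' B ∩ {ω | hs ω = 1}) = P (X ⁻¹' B ∩ {ω | C ω = 1}) := fun B hB =>
    measure_inter_eq_of_setIntegral_eq P hhs hhsbin hC hCbin
      ((hhscond B hB).trans (hcond B hB).symm)
  have hcal : P {ω | hs ω = 1} = P {ω | C ω = 1} := by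
    simpa using hjoint Set.univ MeasurableSet.univ
  refine ⟨⟨hcal, fun B hB => by rw [hjoint B hB, hcal]⟩, ?_⟩
  intro h hh hh01 hcal' hmatch' B hB
  rw [setIntegral_eq_measure_inter_of_zero_or_one P hh hh01, ← hcond B hB,
    setIntegral_eq_measure_inter_of_zero_or_one P hC hCbin]
  exact toReal_measure_inter_eq_of_div_eq P hcal' (hmatch' B hB)

/-- a stochastic classifier h_s with P(h_s = 1 | X) = γ(X) is both
strength-calibrated and distribution-matched; conversely, any binary classifier
satisfying both properties has P(h = 1 | X) = γ(X) (expressed via set integrals). -/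
theorem stochastic_classifier_calibrated_and_matched
    {Ω 𝓧 : Type*} [MeasurableSpace Ω] [MeasurableSpace 𝓧]
    (P : Measure Ω) [IsProbabilityMeasure P]
    (X : Ω → 𝓧) (hX : Measurable X)
    (γ : 𝓧 → ℝ) (hγ : Measurable γ) (hγ01 : ∀ x, γ x ∈ Set.Icc (0:ℝ) 1)
    (hμpos : 0 < ∫ ω, γ (X ω) ∂P)
    (C : Ω → ℝ) (hC : Measurable C) (hCbin : ∀ ω, C ω = 0 ∨ C ω = 1)
    (hcond : ∀ B : Set 𝓧, MeasurableSet B →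
      ∫ ω in X ⁻¹' B, C ω ∂P = ∫ ω in X ⁻¹' B, γ (X ω) ∂P)
    (hs : Ω → ℝ) (hhs : Measurable hs) (hhsbin : ∀ ω, hs ω = 0 ∨ hs ω = 1)
    (hhscond : ∀ B : Set 𝓧, MeasurableSet B →
      ∫ ω in X ⁻¹' B, hs ω ∂P = ∫ ω in X ⁻¹' B, γ (X ω) ∂P) :
    (P {ω | hs ω = 1} = P {ω | C ω = 1}
      ∧ ∀ B : Set 𝓧, MeasurableSet B →
          (P (X ⁻¹' B ∩ {ω | hs ω = 1})).toReal / (P {ω | hs ω = 1}).toReal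
            = (P (X ⁻¹' B ∩ {ω | C ω = 1})).toReal / (P {ω | C ω = 1}).toReal)
    ∧ (∀ h : Ω → ℝ, Measurable h → (∀ ω, h ω = 0 ∨ h ω = 1) →
        P {ω | h ω = 1} = P {ω | C ω = 1} →
        (∀ B : Set 𝓧, MeasurableSet B →
          (P (X ⁻¹' B ∩ {ω | h ω = 1})).toReal / (P {ω | h ω = 1}).toReal
            = (P (X ⁻¹' B ∩ {ω | C ω = 1})).toReal / (P {ω | C ω = 1}).toReal) →
        ∀ B : Set 𝓧, MeasurableSet B →
          ∫ ω in X ⁻¹' B, h ω ∂P = ∫ ω in X ⁻¹' B, γ (X ω) ∂P) :=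
  stochastic_classifier_calibrated_and_matched_general P X γ C hC hCbin hcond hs hhs hhsbin hhscond
end

section
/- Let γ̂, γ: X → [0,1] be measurable, and define the stochastic classifiers h_s ~ Bernoulli(γ) and ĥ_s ~ Bernoulli(γ̂) given X. Then |P(C ≠ ĥ_s) - P(C ≠ h_s)| ≤ √(1 - 2E_s) · ‖γ̂ - γ‖₂, where E_s = 2E[γ - γ²] and ‖·‖₂ is the L²(P) norm. -/
open MeasureTheory
open scoped NNReal ENNReal

lemma bdd_int {Ω : Type*} [MeasurableSpace Ω] {P : Measure Ω} [IsFiniteMeasure P]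
    {f : Ω → ℝ} (hf : AEStronglyMeasurable f P) (hb : ∀ ω, |f ω| ≤ 1) : Integrable f P :=
  Integrable.mono' (integrable_const 1) hf
    (Filter.Eventually.of_forall fun ω => by simpa [Real.norm_eq_abs] using hb ω)

lemma cs_int {Ω : Type*} [MeasurableSpace Ω] {P : Measure Ω}
    {f g : Ω → ℝ} (hf2 : Integrable (fun ω => f ω ^ 2) P)
    (hg2 : Integrable (fun ω => g ω ^ 2) P)
    (hfg : Integrable (fun ω => f ω * g ω) P) :
    |∫ ω, f ω * g ω ∂P| ≤ Real.sqrt (∫ ω, f ω ^ 2 ∂P) * Real.sqrt (∫ ω, g ω ^ 2 ∂P) := by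
  set a := ∫ ω, f ω ^ 2 ∂P with ha
  set c := ∫ ω, g ω ^ 2 ∂P with hc
  set b := ∫ ω, f ω * g ω ∂P with hb
  have ha0 : 0 ≤ a := integral_nonneg fun ω => sq_nonneg _
  have hc0 : 0 ≤ c := integral_nonneg fun ω => sq_nonneg _
  have key : ∀ t : ℝ, 0 ≤ a - 2 * t * b + t ^ 2 * c := by
    intro t
    have h1 : 0 ≤ ∫ ω, (f ω - t * g ω) ^ 2 ∂P := integral_nonneg fun ω => sq_nonneg _
    have h2 : ∫ ω, (f ω - t * g ω) ^ 2 ∂P = a - 2 * t * b + t ^ 2 * c := by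
      have : (fun ω => (f ω - t * g ω) ^ 2)
          = fun ω => (f ω ^ 2 - 2 * t * (f ω * g ω)) + t ^ 2 * g ω ^ 2 := by
        funext ω; ring
      have i2 : Integrable (fun ω => 2 * t * (f ω * g ω)) P := hfg.const_mul _
      have i12 : Integrable (fun ω => f ω ^ 2 - 2 * t * (f ω * g ω)) P := hf2.sub i2
      have i3 : Integrable (fun ω => t ^ 2 * g ω ^ 2) P := hg2.const_mul _
      rw [this, integral_add i12 i3, integral_sub hf2 i2, integral_const_mul,
        integral_const_mul]
    linarith [h2 ▸ h1]
  have hbac : b ^ 2 ≤ a * c := by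
    rcases eq_or_lt_of_le hc0 with hc' | hc'
    · have hb0 : b = 0 := by
        by_contra hbne
        have h1 := key ((a + 1) / (2 * b))
        have h2 : 2 * ((a + 1) / (2 * b)) * b = a + 1 := by
          field_simp
        nlinarith [h1, h2, sq_nonneg ((a+1)/(2*b))]
      rw [hb0]; nlinarith
    · have h1 := key (b / c)
      have h2 : 2 * (b / c) * b = 2 * (b ^ 2 / c) := by ring
      have h3 : (b / c) ^ 2 * c = b ^ 2 / c := by
        field_simp
      rw [h2, h3] at h1
      have := (div_le_iff₀ hc').mp (by linarith : b ^ 2 / c ≤ a)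
      linarith
  calc |b| = Real.sqrt (b ^ 2) := (Real.sqrt_sq_eq_abs b).symm
    _ ≤ Real.sqrt (a * c) := Real.sqrt_le_sqrt hbac
    _ = Real.sqrt a * Real.sqrt c := Real.sqrt_mul ha0 c

lemma unif_ind {t : ℝ} (h0 : 0 ≤ t) (h1 : t ≤ 1) :
    ∫ u, (if t > u then (1:ℝ) else 0) ∂(volume.restrict (Set.Icc (0:ℝ) 1)) = t := by
  have hind : (fun u => if t > u then (1:ℝ) else 0)
      = (Set.Iio t).indicator (fun _ => (1:ℝ)) := by
    funext u; simp [Set.indicator_apply, Set.mem_Iio, gt_iff_lt]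
  have hset : Set.Iio t ∩ Set.Icc (0:ℝ) 1 = Set.Ico 0 t := by
    ext u
    simp only [Set.mem_inter_iff, Set.mem_Iio, Set.mem_Icc, Set.mem_Ico]
    constructor
    · rintro ⟨hu, hu0, _⟩; exact ⟨hu0, hu⟩
    · rintro ⟨hu0, hu⟩; exact ⟨hu, hu0, hu.le.trans h1⟩
  rw [hind, integral_indicator_const (1:ℝ) measurableSet_Iio, measureReal_def,
    Measure.restrict_apply measurableSet_Iio, hset, Real.volume_Ico, smul_eq_mul,
    mul_one, ENNReal.toReal_ofReal (by linarith)]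
  ring

/-- Fubini / independence step. -/
lemma key_fubini {Ω 𝓧 : Type*} [MeasurableSpace Ω] [MeasurableSpace 𝓧]
    (P : Measure Ω) [IsProbabilityMeasure P]
    (X : Ω → 𝓧) (hX : Measurable X)
    (C : Ω → ℝ) (hC : Measurable C)
    (U : Ω → ℝ) (hU : Measurable U)
    (hUunif : P.map U = volume.restrict (Set.Icc (0:ℝ) 1))
    (hUindep : ProbabilityTheory.IndepFun U (fun ω => (X ω, C ω)) P)
    (φ : 𝓧 → ℝ) (hφ : Measurable φ) (hφ01 : ∀ x, φ x ∈ Set.Icc (0:ℝ) 1)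
    (w : ℝ → ℝ) (hw : Measurable w) (hw1 : ∀ c, |w c| ≤ 1) :
    ∫ ω, w (C ω) * (if φ (X ω) > U ω then (1:ℝ) else 0) ∂P
      = ∫ ω, w (C ω) * φ (X ω) ∂P := by
  have hXC : Measurable (fun ω => (X ω, C ω)) := hX.prodMk hC
  set F : ℝ × (𝓧 × ℝ) → ℝ := fun p => w p.2.2 * (if φ p.2.1 > p.1 then 1 else 0) with hF
  have hScond : MeasurableSet {p : ℝ × (𝓧 × ℝ) | φ p.2.1 > p.1} :=
    measurableSet_lt measurable_fst (hφ.comp (measurable_fst.comp measurable_snd))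
  have hFm : Measurable F :=
    ((hw.comp (measurable_snd.comp measurable_snd)).mul
      (Measurable.ite hScond measurable_const measurable_const))
  have hmap : P.map (fun ω => (U ω, (X ω, C ω))) = (P.map U).prod (P.map (fun ω => (X ω, C ω))) :=
    (ProbabilityTheory.indepFun_iff_map_prod_eq_prod_map_map hU.aemeasurable
      hXC.aemeasurable).mp hUindep
  haveI : IsProbabilityMeasure (P.map U) := Measure.isProbabilityMeasure_map hU.aemeasurable
  haveI : IsProbabilityMeasure (P.map (fun ω => (X ω, C ω))) :=
    Measure.isProbabilityMeasure_map hXC.aemeasurable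
  have hFb : ∀ p, |F p| ≤ 1 := by
    intro p
    rw [hF, abs_mul]
    have h1 : |w p.2.2| ≤ 1 := hw1 _
    have h2 : |if φ p.2.1 > p.1 then (1:ℝ) else 0| ≤ 1 := by split_ifs <;> norm_num
    calc |w p.2.2| * |if φ p.2.1 > p.1 then (1:ℝ) else 0| ≤ 1 * 1 :=
          mul_le_mul h1 h2 (abs_nonneg _) (by norm_num)
      _ = 1 := by norm_num
  have hFint : Integrable F ((P.map U).prod (P.map (fun ω => (X ω, C ω)))) :=
    bdd_int hFm.aestronglyMeasurable hFb
  have hinner : ∀ q : 𝓧 × ℝ, ∫ u, F (u, q) ∂(P.map U) = w q.2 * φ q.1 := by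
    intro q
    show ∫ u, w q.2 * (if φ q.1 > u then (1:ℝ) else 0) ∂(P.map U) = w q.2 * φ q.1
    rw [integral_const_mul, hUunif, unif_ind (hφ01 q.1).1 (hφ01 q.1).2]
  calc ∫ ω, w (C ω) * (if φ (X ω) > U ω then (1:ℝ) else 0) ∂P
      = ∫ p, F p ∂(P.map (fun ω => (U ω, (X ω, C ω)))) :=
        (integral_map ((hU.prodMk hXC).aemeasurable) hFm.aestronglyMeasurable).symm
    _ = ∫ p, F p ∂((P.map U).prod (P.map (fun ω => (X ω, C ω)))) := by rw [hmap]
    _ = ∫ q, ∫ u, F (u, q) ∂(P.map U) ∂(P.map (fun ω => (X ω, C ω))) :=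
        integral_prod_symm F hFint
    _ = ∫ q : 𝓧 × ℝ, w q.2 * φ q.1 ∂(P.map (fun ω => (X ω, C ω))) := by
        exact integral_congr_ae (Filter.Eventually.of_forall hinner)
    _ = ∫ ω, w (C ω) * φ (X ω) ∂P :=
        integral_map hXC.aemeasurable
          ((hw.comp measurable_snd).mul (hφ.comp measurable_fst)).aestronglyMeasurable

/-- conditional expectation extension step. -/
lemma cond_ext {Ω 𝓧 : Type*} [MeasurableSpace Ω] [MeasurableSpace 𝓧]
    (P : Measure Ω) [IsProbabilityMeasure P]
    (X : Ω → 𝓧) (hX : Measurable X)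
    (γ : 𝓧 → ℝ) (hγ : Measurable γ) (hγ01 : ∀ x, γ x ∈ Set.Icc (0:ℝ) 1)
    (C : Ω → ℝ) (hC : Measurable C) (hCbin : ∀ ω, C ω = 0 ∨ C ω = 1)
    (hcond : ∀ B : Set 𝓧, MeasurableSet B →
      ∫ ω in X ⁻¹' B, C ω ∂P = ∫ ω in X ⁻¹' B, γ (X ω) ∂P)
    (φ : 𝓧 → ℝ) (hφ : Measurable φ) :
    ∫ ω, C ω * φ (X ω) ∂P = ∫ ω, γ (X ω) * φ (X ω) ∂P := by
  have hC0 : ∀ ω, 0 ≤ C ω := fun ω => by rcases hCbin ω with h | h <;> rw [h] <;> norm_num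
  have hγ0 : ∀ ω, 0 ≤ γ (X ω) := fun ω => (hγ01 (X ω)).1
  have hCi : Integrable C P := bdd_int hC.aestronglyMeasurable
    (fun ω => by rcases hCbin ω with h | h <;> rw [h] <;> norm_num)
  have hγi : Integrable (fun ω => γ (X ω)) P := bdd_int (hγ.comp hX).aestronglyMeasurable
    (fun ω => abs_le.mpr ⟨by linarith [(hγ01 (X ω)).1], (hγ01 (X ω)).2⟩)
  have hmeq : (P.withDensity fun ω => (((C ω).toNNReal : ℝ≥0) : ℝ≥0∞)).map X
      = (P.withDensity fun ω => (((γ (X ω)).toNNReal : ℝ≥0) : ℝ≥0∞)).map X := by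
    ext B hB
    rw [Measure.map_apply hX hB, Measure.map_apply hX hB,
      withDensity_apply _ (hX hB), withDensity_apply _ (hX hB)]
    have e1 : ∫⁻ ω in X ⁻¹' B, (((C ω).toNNReal : ℝ≥0) : ℝ≥0∞) ∂P
        = ENNReal.ofReal (∫ ω in X ⁻¹' B, C ω ∂P) :=
      (ofReal_integral_eq_lintegral_ofReal hCi.restrict
        (Filter.Eventually.of_forall hC0)).symm
    have e2 : ∫⁻ ω in X ⁻¹' B, (((γ (X ω)).toNNReal : ℝ≥0) : ℝ≥0∞) ∂P
        = ENNReal.ofReal (∫ ω in X ⁻¹' B, γ (X ω) ∂P) :=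
      (ofReal_integral_eq_lintegral_ofReal hγi.restrict
        (Filter.Eventually.of_forall hγ0)).symm
    rw [e1, e2, hcond B hB]
  have key : ∀ (ρ : Ω → ℝ), Measurable ρ → (∀ ω, 0 ≤ ρ ω) →
      ∫ x, φ x ∂((P.withDensity fun ω => (((ρ ω).toNNReal : ℝ≥0) : ℝ≥0∞)).map X)
        = ∫ ω, ρ ω * φ (X ω) ∂P := by
    intro ρ hρ hρ0
    rw [integral_map hX.aemeasurable hφ.aestronglyMeasurable,
      integral_withDensity_eq_integral_smul hρ.real_toNNReal]
    refine integral_congr_ae (Filter.Eventually.of_forall fun ω => ?_)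
    simp [NNReal.smul_def, Real.coe_toNNReal _ (hρ0 ω)]
  calc ∫ ω, C ω * φ (X ω) ∂P
      = ∫ x, φ x ∂((P.withDensity fun ω => (((C ω).toNNReal : ℝ≥0) : ℝ≥0∞)).map X) :=
        (key C hC hC0).symm
    _ = ∫ x, φ x ∂((P.withDensity fun ω => (((γ (X ω)).toNNReal : ℝ≥0) : ℝ≥0∞)).map X) := by
        rw [hmeq]
    _ = ∫ ω, γ (X ω) * φ (X ω) ∂P := key _ (hγ.comp hX) hγ0

/-- The error probability of the stochastic classifier built from φ. -/
lemma err_eq {Ω 𝓧 : Type*} [MeasurableSpace Ω] [MeasurableSpace 𝓧]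
    (P : Measure Ω) [IsProbabilityMeasure P]
    (X : Ω → 𝓧) (hX : Measurable X)
    (γ : 𝓧 → ℝ) (hγ : Measurable γ) (hγ01 : ∀ x, γ x ∈ Set.Icc (0:ℝ) 1)
    (C : Ω → ℝ) (hC : Measurable C) (hCbin : ∀ ω, C ω = 0 ∨ C ω = 1)
    (hcond : ∀ B : Set 𝓧, MeasurableSet B →
      ∫ ω in X ⁻¹' B, C ω ∂P = ∫ ω in X ⁻¹' B, γ (X ω) ∂P)
    (U : Ω → ℝ) (hU : Measurable U)
    (hUunif : P.map U = volume.restrict (Set.Icc (0:ℝ) 1))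
    (hUindep : ProbabilityTheory.IndepFun U (fun ω => (X ω, C ω)) P)
    (φ : 𝓧 → ℝ) (hφ : Measurable φ) (hφ01 : ∀ x, φ x ∈ Set.Icc (0:ℝ) 1) :
    (P {ω | C ω ≠ (if φ (X ω) > U ω then (1:ℝ) else 0)}).toReal
      = (∫ ω, γ (X ω) ∂P) + (∫ ω, φ (X ω) ∂P) - 2 * ∫ ω, γ (X ω) * φ (X ω) ∂P := by
  set h : Ω → ℝ := fun ω => if φ (X ω) > U ω then (1:ℝ) else 0 with hh
  have hhm : Measurable h := by
    apply Measurable.ite _ measurable_const measurable_const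
    exact measurableSet_lt hU (hφ.comp hX)
  have hA : MeasurableSet {ω | C ω ≠ h ω} :=
    (measurableSet_eq_fun hC hhm).compl
  -- |indicator| = (C - h)^2
  have hind : (fun ω => ({ω | C ω ≠ h ω}).indicator (fun _ => (1:ℝ)) ω)
      = fun ω => (C ω - h ω) ^ 2 := by
    funext ω
    rcases hCbin ω with h0 | h0 <;> by_cases hif : φ (X ω) > U ω <;>
      simp [Set.indicator_apply, hh, h0, hif] <;> norm_num
  have step1 : (P {ω | C ω ≠ h ω}).toReal = ∫ ω, (C ω - h ω) ^ 2 ∂P := by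
    rw [← hind, integral_indicator_const (1:ℝ) hA, smul_eq_mul, mul_one, measureReal_def]
  -- boundedness facts
  have hCb : ∀ ω, |C ω| ≤ 1 := fun ω => by rcases hCbin ω with h0 | h0 <;> rw [h0] <;> norm_num
  have hhb : ∀ ω, |h ω| ≤ 1 := fun ω => by rw [hh]; dsimp only; split_ifs <;> norm_num
  have hCi : Integrable C P := bdd_int hC.aestronglyMeasurable hCb
  have hhi : Integrable h P := bdd_int hhm.aestronglyMeasurable hhb
  have hChi : Integrable (fun ω => C ω * h ω) P :=
    bdd_int (hC.mul hhm).aestronglyMeasurable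
      (fun ω => by rw [abs_mul]; exact mul_le_one₀ (hCb ω) (abs_nonneg _) (hhb ω))
  -- expand the square
  have hsq : (fun ω => (C ω - h ω) ^ 2) = fun ω => C ω + h ω - 2 * (C ω * h ω) := by
    funext ω
    have hc2 : C ω ^ 2 = C ω := by rcases hCbin ω with h0 | h0 <;> rw [h0] <;> norm_num
    have hh2 : h ω ^ 2 = h ω := by rw [hh]; dsimp only; split_ifs <;> norm_num
    nlinarith [hc2, hh2]
  have step2 : ∫ ω, (C ω - h ω) ^ 2 ∂P
      = (∫ ω, C ω ∂P) + (∫ ω, h ω ∂P) - 2 * ∫ ω, C ω * h ω ∂P := by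
    have i_add : Integrable (fun ω => C ω + h ω) P := hCi.add hhi
    have i_mul : Integrable (fun ω => 2 * (C ω * h ω)) P := hChi.const_mul 2
    rw [hsq, integral_sub i_add i_mul, integral_add hCi hhi, integral_const_mul]
  -- identify each piece
  have hCeq : ∫ ω, C ω ∂P = ∫ ω, γ (X ω) ∂P := by
    have := hcond Set.univ MeasurableSet.univ
    simpa [Measure.restrict_univ] using this
  have hw : Measurable (fun c : ℝ => min (max c 0) 1) :=
    (measurable_id.max measurable_const).min measurable_const
  have hwb : ∀ c : ℝ, |min (max c 0) 1| ≤ 1 := by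
    intro c
    rw [abs_le]
    constructor
    · have : (0:ℝ) ≤ max c 0 := le_max_right c 0
      have := le_min this (by norm_num : (0:ℝ) ≤ 1)
      linarith [this]
    · exact min_le_right _ _
  have hwC : ∀ ω, min (max (C ω) 0) 1 = C ω := by
    intro ω; rcases hCbin ω with h0 | h0 <;> rw [h0] <;> norm_num
  have hheq : ∫ ω, h ω ∂P = ∫ ω, φ (X ω) ∂P := by
    have := key_fubini P X hX C hC U hU hUunif hUindep φ hφ hφ01
      (fun _ => 1) measurable_const (fun _ => by norm_num)
    simpa using this
  have hCheq : ∫ ω, C ω * h ω ∂P = ∫ ω, γ (X ω) * φ (X ω) ∂P := by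
    have hfb := key_fubini P X hX C hC U hU hUunif hUindep φ hφ hφ01
      (fun c => min (max c 0) 1) hw hwb
    simp only [hwC] at hfb
    rw [hh]
    calc ∫ ω, C ω * (if φ (X ω) > U ω then (1:ℝ) else 0) ∂P
        = ∫ ω, C ω * φ (X ω) ∂P := hfb
      _ = ∫ ω, γ (X ω) * φ (X ω) ∂P :=
          cond_ext P X hX γ hγ hγ01 C hC hCbin hcond φ hφ
  rw [step1, step2, hCeq, hheq, hCheq]

/-- for stochastic classifiers h_s = 1{γ(X) > U} and ĥ_s = 1{γ̂(X) > U}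
with U uniform on [0,1] independent of (X, C), the difference in classification errors is
at most √(1-2E_s) · ‖γ̂ - γ‖₂. -/
theorem stochastic_classifier_estimation_error
    {Ω 𝓧 : Type*} [MeasurableSpace Ω] [MeasurableSpace 𝓧]
    (P : Measure Ω) [IsProbabilityMeasure P]
    (X : Ω → 𝓧) (hX : Measurable X)
    (γ γhat : 𝓧 → ℝ) (hγ : Measurable γ) (hγhat : Measurable γhat)
    (hγ01 : ∀ x, γ x ∈ Set.Icc (0:ℝ) 1) (hγhat01 : ∀ x, γhat x ∈ Set.Icc (0:ℝ) 1)
    (C : Ω → ℝ) (hC : Measurable C) (hCbin : ∀ ω, C ω = 0 ∨ C ω = 1)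
    (hcond : ∀ B : Set 𝓧, MeasurableSet B →
      ∫ ω in X ⁻¹' B, C ω ∂P = ∫ ω in X ⁻¹' B, γ (X ω) ∂P)
    (U : Ω → ℝ) (hU : Measurable U)
    (hUunif : P.map U = volume.restrict (Set.Icc (0:ℝ) 1))
    (hUindep : ProbabilityTheory.IndepFun U (fun ω => (X ω, C ω)) P)
    (Es : ℝ) (hEs : Es = 2 * ∫ ω, (γ (X ω) - γ (X ω) ^ 2) ∂P) :
    |(P {ω | C ω ≠ (if γhat (X ω) > U ω then (1:ℝ) else 0)}).toReal
      - (P {ω | C ω ≠ (if γ (X ω) > U ω then (1:ℝ) else 0)}).toReal|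
      ≤ Real.sqrt (1 - 2 * Es)
        * Real.sqrt (∫ ω, (γhat (X ω) - γ (X ω)) ^ 2 ∂P) := by
  have e1 := err_eq P X hX γ hγ hγ01 C hC hCbin hcond U hU hUunif hUindep γhat hγhat hγhat01
  have e2 := err_eq P X hX γ hγ hγ01 C hC hCbin hcond U hU hUunif hUindep γ hγ hγ01
  rw [e1, e2]
  -- set up the two L² functions
  set f : Ω → ℝ := fun ω => 1 - 2 * γ (X ω) with hf
  set g : Ω → ℝ := fun ω => γhat (X ω) - γ (X ω) with hg
  have hfm : Measurable f := measurable_const.sub ((hγ.comp hX).const_mul 2)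
  have hgm : Measurable g := (hγhat.comp hX).sub (hγ.comp hX)
  have hfb : ∀ ω, |f ω| ≤ 1 := by
    intro ω; rw [hf]; dsimp only
    have := hγ01 (X ω); rw [abs_le]; constructor <;> [linarith [this.2]; linarith [this.1]]
  have hgb : ∀ ω, |g ω| ≤ 1 := by
    intro ω; rw [hg]; dsimp only
    have h1 := hγ01 (X ω); have h2 := hγhat01 (X ω)
    rw [abs_le]; constructor <;> [linarith [h1.2, h2.1]; linarith [h1.1, h2.2]]
  have sq_bdd : ∀ (u : Ω → ℝ), (∀ ω, |u ω| ≤ 1) → ∀ ω, |u ω ^ 2| ≤ 1 := by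
    intro u hu ω
    rw [abs_pow]
    calc |u ω| ^ 2 ≤ 1 ^ 2 := pow_le_pow_left₀ (abs_nonneg _) (hu ω) 2
      _ = 1 := one_pow 2
  have hf2 : Integrable (fun ω => f ω ^ 2) P :=
    bdd_int (hfm.pow_const 2).aestronglyMeasurable (sq_bdd f hfb)
  have hg2 : Integrable (fun ω => g ω ^ 2) P :=
    bdd_int (hgm.pow_const 2).aestronglyMeasurable (sq_bdd g hgb)
  have hfg : Integrable (fun ω => f ω * g ω) P :=
    bdd_int (hfm.mul hgm).aestronglyMeasurable
      (fun ω => by rw [abs_mul]; exact mul_le_one₀ (hfb ω) (abs_nonneg _) (hgb ω))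
  -- basic integrable pieces
  have iγ : Integrable (fun ω => γ (X ω)) P := bdd_int (hγ.comp hX).aestronglyMeasurable
    (fun ω => abs_le.mpr ⟨by linarith [(hγ01 (X ω)).1], (hγ01 (X ω)).2⟩)
  have iγh : Integrable (fun ω => γhat (X ω)) P := bdd_int (hγhat.comp hX).aestronglyMeasurable
    (fun ω => abs_le.mpr ⟨by linarith [(hγhat01 (X ω)).1], (hγhat01 (X ω)).2⟩)
  have iγγh : Integrable (fun ω => γ (X ω) * γhat (X ω)) P :=
    bdd_int ((hγ.comp hX).mul (hγhat.comp hX)).aestronglyMeasurable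
      (fun ω => by
        rw [abs_mul]
        exact mul_le_one₀ (abs_le.mpr ⟨by linarith [(hγ01 (X ω)).1], (hγ01 (X ω)).2⟩)
          (abs_nonneg _) (abs_le.mpr ⟨by linarith [(hγhat01 (X ω)).1], (hγhat01 (X ω)).2⟩))
  have iγγ : Integrable (fun ω => γ (X ω) * γ (X ω)) P :=
    bdd_int ((hγ.comp hX).mul (hγ.comp hX)).aestronglyMeasurable
      (fun ω => by
        rw [abs_mul]
        exact mul_le_one₀ (abs_le.mpr ⟨by linarith [(hγ01 (X ω)).1], (hγ01 (X ω)).2⟩)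
          (abs_nonneg _) (abs_le.mpr ⟨by linarith [(hγ01 (X ω)).1], (hγ01 (X ω)).2⟩))
  -- the difference equals ∫ f g
  have hdiff : ((∫ ω, γ (X ω) ∂P) + (∫ ω, γhat (X ω) ∂P) - 2 * ∫ ω, γ (X ω) * γhat (X ω) ∂P)
      - ((∫ ω, γ (X ω) ∂P) + (∫ ω, γ (X ω) ∂P) - 2 * ∫ ω, γ (X ω) * γ (X ω) ∂P)
      = ∫ ω, f ω * g ω ∂P := by
    have expand : (fun ω => f ω * g ω)
        = fun ω => (γhat (X ω) - γ (X ω))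
            - (2 * (γ (X ω) * γhat (X ω)) - 2 * (γ (X ω) * γ (X ω))) := by
      funext ω; rw [hf, hg]; ring
    have i1 : Integrable (fun ω => γhat (X ω) - γ (X ω)) P := iγh.sub iγ
    have i2 : Integrable (fun ω => 2 * (γ (X ω) * γhat (X ω))) P := iγγh.const_mul 2
    have i3 : Integrable (fun ω => 2 * (γ (X ω) * γ (X ω))) P := iγγ.const_mul 2
    have i23 : Integrable (fun ω => 2 * (γ (X ω) * γhat (X ω)) - 2 * (γ (X ω) * γ (X ω))) P :=
      i2.sub i3
    rw [expand, integral_sub i1 i23, integral_sub iγh iγ, integral_sub i2 i3,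
      integral_const_mul, integral_const_mul]
    ring
  -- ∫ f² = 1 - 2 Es
  have hf2val : ∫ ω, f ω ^ 2 ∂P = 1 - 2 * Es := by
    have iγsub : Integrable (fun ω => γ (X ω) - γ (X ω) ^ 2) P := by
      have : (fun ω => γ (X ω) - γ (X ω) ^ 2) = fun ω => γ (X ω) - γ (X ω) * γ (X ω) := by
        funext ω; ring
      rw [this]; exact iγ.sub iγγ
    have expand : (fun ω => f ω ^ 2) = fun ω => 1 - 4 * (γ (X ω) - γ (X ω) ^ 2) := by
      funext ω; rw [hf]; ring
    have i4 : Integrable (fun ω => 4 * (γ (X ω) - γ (X ω) ^ 2)) P := iγsub.const_mul 4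
    rw [expand, integral_sub (integrable_const 1) i4, integral_const,
      integral_const_mul, hEs]
    simp [measure_univ]
    ring
  calc |((∫ ω, γ (X ω) ∂P) + (∫ ω, γhat (X ω) ∂P) - 2 * ∫ ω, γ (X ω) * γhat (X ω) ∂P)
      - ((∫ ω, γ (X ω) ∂P) + (∫ ω, γ (X ω) ∂P) - 2 * ∫ ω, γ (X ω) * γ (X ω) ∂P)|
      = |∫ ω, f ω * g ω ∂P| := by rw [hdiff]
    _ ≤ Real.sqrt (∫ ω, f ω ^ 2 ∂P) * Real.sqrt (∫ ω, g ω ^ 2 ∂P) := cs_int hf2 hg2 hfg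
    _ = Real.sqrt (1 - 2 * Es) * Real.sqrt (∫ ω, (γhat (X ω) - γ (X ω)) ^ 2 ∂P) := by
        rw [hf2val]
end

section
/- Suppose the margin condition P(|γ(X) − q| ≤ t) ≤ M t^α holds for all t > 0 and some constants M, α > 0. Let ĥ_q = 1{γ̂ > q̂} and h_q = 1{γ > q}. Then the excess classification error satisfies |P(C ≠ ĥ_q) − P(C ≠ h_q)| ≤ K (‖γ̂ − γ‖_∞ + |q̂ − q|)^α for a constant K depending only on M (and the fact that γ, q ∈ [0,1]). -/
open MeasureTheory
open scoped symmDiff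

/-!
On the event where the plug-in classifier `1{γ̂ > q̂}` and the oracle `1{γ > q}` agree, the two
misclassification events coincide, so the excess error is at most the probability that they
disagree. Disagreement forces `γ(X)` to lie within `t = ‖γ̂ - γ‖_∞ + |q̂ - q|` of `q`, and by the
margin condition this has probability at most `M t^α`; hence `K = M` works. When `t = 0`, where
the margin condition says nothing, the two classifiers never disagree.
-/

theorem abs_measureReal_sub_le_measureReal_symmDiff {Ω : Type*} [MeasurableSpace Ω]
    (μ : Measure Ω) [IsFiniteMeasure μ] (s t : Set Ω) :
    |μ.real s - μ.real t| ≤ μ.real (s ∆ t) :=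
  abs_sub_le_iff.mpr
    ⟨(le_measureReal_sdiff ..).trans (measureReal_mono Set.subset_union_left),
      (le_measureReal_sdiff ..).trans (measureReal_mono Set.subset_union_right)⟩

theorem Set.symmDiff_setOf_ne_subset {Ω β : Type*} (f g h : Ω → β) :
    {ω | f ω ≠ g ω} ∆ {ω | f ω ≠ h ω} ⊆ {ω | g ω ≠ h ω} := by
  rintro ω (⟨hg, hh⟩ | ⟨hh, hg⟩) <;> simp_all [eq_comm]

theorem abs_sub_le_of_lt_ne_lt {𝕜 : Type*} [Field 𝕜] [LinearOrder 𝕜] [IsStrictOrderedRing 𝕜]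
    {a b a' b' : 𝕜} (h : (b' < a') ≠ (b < a)) :
    0 < |a' - a| + |b' - b| ∧ |a - b| ≤ |a' - a| + |b' - b| := by
  have := le_abs_self (a' - a); have := neg_abs_le (a' - a)
  have := le_abs_self (b' - b); have := neg_abs_le (b' - b)
  by_cases h' : b' < a' <;> by_cases h₀ : b < a <;>
    simp only [h', h₀, ne_eq, not_true_eq_false] at h <;>
    exact ⟨by linarith, abs_le.mpr ⟨by linarith, by linarith⟩⟩

theorem plugin_quantile_excess_error_margin_general
    {Ω 𝓧 : Type*} [MeasurableSpace Ω] [MeasurableSpace 𝓧]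
    (P : Measure Ω) [IsProbabilityMeasure P]
    (X : Ω → 𝓧)
    (γ : 𝓧 → ℝ)
    (C : Ω → ℝ)
    (q : ℝ)
    (M α : ℝ) (hM : 0 < M)
    (hmargin : ∀ t : ℝ, 0 < t → (P {ω | |γ (X ω) - q| ≤ t}).toReal ≤ M * t ^ α) :
    ∃ K : ℝ, 0 < K ∧ ∀ (γhat : 𝓧 → ℝ), Measurable γhat → ∀ (qhat κ₁ : ℝ),
      (∀ x, |γhat x - γ x| ≤ κ₁) →
      |(P {ω | C ω ≠ (if γhat (X ω) > qhat then (1:ℝ) else 0)}).toReal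
        - (P {ω | C ω ≠ (if γ (X ω) > q then (1:ℝ) else 0)}).toReal|
        ≤ K * (κ₁ + |qhat - q|) ^ α := by
  refine ⟨M, hM, fun γhat _ qhat κ₁ hκ => ?_⟩
  obtain ⟨ω₀⟩ := nonempty_of_isProbabilityMeasure P
  have hκ₁ : 0 ≤ κ₁ := (abs_nonneg _).trans (hκ (X ω₀))
  have hdisagree :
      {ω | C ω ≠ (if γhat (X ω) > qhat then (1:ℝ) else 0)} ∆
          {ω | C ω ≠ (if γ (X ω) > q then (1:ℝ) else 0)} ⊆
        {ω | 0 < κ₁ + |qhat - q| ∧ |γ (X ω) - q| ≤ κ₁ + |qhat - q|} := by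
    refine (Set.symmDiff_setOf_ne_subset ..).trans fun ω hω => ?_
    have hne : (qhat < γhat (X ω)) ≠ (q < γ (X ω)) := fun h => hω (by simp only [gt_iff_lt, h])
    obtain ⟨hpos, hle⟩ := abs_sub_le_of_lt_ne_lt hne
    exact ⟨hpos.trans_le (by gcongr; exact hκ _), hle.trans (by gcongr; exact hκ _)⟩
  calc _ ≤ P.real _ := abs_measureReal_sub_le_measureReal_symmDiff P _ _
    _ ≤ P.real {ω | 0 < κ₁ + |qhat - q| ∧ |γ (X ω) - q| ≤ κ₁ + |qhat - q|} :=
      measureReal_mono hdisagree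
    _ ≤ M * (κ₁ + |qhat - q|) ^ α := by
      rcases lt_or_ge 0 (κ₁ + |qhat - q|) with ht | ht
      · exact (measureReal_mono fun ω hω => hω.2).trans (hmargin _ ht)
      · simp only [ht.not_gt, false_and, Set.ofPred_false, measureReal_empty]
        exact mul_nonneg hM.le (Real.rpow_nonneg (by positivity) α)

/-- under a margin condition P(|γ(X) - q| ≤ t) ≤ M t^α, the excess error of
the plug-in quantile classifier is bounded by K (‖γ̂ - γ‖_∞ + |q̂ - q|)^α for a constant K
depending only on M. -/
theorem plugin_quantile_excess_error_margin
    {Ω 𝓧 : Type*} [MeasurableSpace Ω] [MeasurableSpace 𝓧]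
    (P : Measure Ω) [IsProbabilityMeasure P]
    (X : Ω → 𝓧) (hX : Measurable X)
    (γ : 𝓧 → ℝ) (hγ : Measurable γ) (hγ01 : ∀ x, γ x ∈ Set.Icc (0:ℝ) 1)
    (C : Ω → ℝ) (hC : Measurable C) (hCbin : ∀ ω, C ω = 0 ∨ C ω = 1)
    (hcond : ∀ B : Set 𝓧, MeasurableSet B →
      ∫ ω in X ⁻¹' B, C ω ∂P = ∫ ω in X ⁻¹' B, γ (X ω) ∂P)
    (q : ℝ) (hq01 : q ∈ Set.Icc (0:ℝ) 1)
    (M α : ℝ) (hM : 0 < M) (hα : 0 < α)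
    (hmargin : ∀ t : ℝ, 0 < t → (P {ω | |γ (X ω) - q| ≤ t}).toReal ≤ M * t ^ α) :
    ∃ K : ℝ, 0 < K ∧ ∀ (γhat : 𝓧 → ℝ), Measurable γhat → ∀ (qhat κ₁ : ℝ),
      (∀ x, |γhat x - γ x| ≤ κ₁) →
      |(P {ω | C ω ≠ (if γhat (X ω) > qhat then (1:ℝ) else 0)}).toReal
        - (P {ω | C ω ≠ (if γ (X ω) > q then (1:ℝ) else 0)}).toReal|
        ≤ K * (κ₁ + |qhat - q|) ^ α :=
  plugin_quantile_excess_error_margin_general P X γ C q M α hM hmargin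
end

section
/- Under the instrumental variable assumptions (consistency, positivity, unconfounded instrument, exclusion restriction, strong monotonicity) and with outcome Y ∈ [0,1] almost surely, for any measurable subgroup indicator g: X → {0,1} with P(g(X)=1) > 0, the subgroup average treatment effect β(g) = E[Y^{a=1} − Y^{a=0} | g(X)=1] satisfies β_l(g) ≤ β(g) ≤ β_u(g), where β_u(g) = E[E(YA + 1−A | X, Z=1) − E(Y(1−A) | X, Z=0) | g=1] and β_l(g) = E[E(YA | X, Z=1) − E(Y(1−A) + A | X, Z=0) | g=1]. -/
open MeasureTheory


namespace IVAux

/-- clamp to [0,1] -/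
noncomputable def clamp (t : ℝ) : ℝ := max 0 (min 1 t)

lemma clamp_eq {t : ℝ} (h0 : 0 ≤ t) (h1 : t ≤ 1) : clamp t = t := by
  unfold clamp
  rw [min_eq_right h1, max_eq_right h0]

lemma clamp_mem (t : ℝ) : clamp t ∈ Set.Icc (0:ℝ) 1 :=
  ⟨le_max_left _ _, max_le zero_le_one (min_le_left _ _)⟩

lemma clamp_abs_le (t : ℝ) : |clamp t| ≤ 1 := by
  have h := clamp_mem t
  rw [abs_le]; constructor <;> [linarith [h.1]; exact h.2]

lemma measurable_clamp : Measurable clamp :=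
  measurable_const.max (measurable_const.min measurable_id)

variable {Ω 𝓧 : Type*} [MeasurableSpace Ω] [MeasurableSpace 𝓧]

lemma bdd_integrable (P : Measure Ω) [IsFiniteMeasure P] {f : Ω → ℝ}
    (hf : Measurable f) {C : ℝ} (h : ∀ ω, |f ω| ≤ C) : Integrable f P :=
  (integrable_const C).mono' hf.aestronglyMeasurable
    (Filter.Eventually.of_forall fun ω => by simpa [Real.norm_eq_abs] using h ω)

lemma ae_icc_of_setIntegral (P : Measure Ω) [IsProbabilityMeasure P]
    {X : Ω → 𝓧} (hX : Measurable X) {S : Set Ω} (hS : MeasurableSet S)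
    {m : 𝓧 → ℝ} (hm : Measurable m)
    (hcover : ∀ B : Set 𝓧, MeasurableSet B → P (X ⁻¹' B ∩ S) = 0 → P (X ⁻¹' B) = 0)
    (hlow : ∀ B : Set 𝓧, MeasurableSet B → 0 ≤ ∫ ω in X ⁻¹' B ∩ S, m (X ω) ∂P)
    (hhigh : ∀ B : Set 𝓧, MeasurableSet B →
      ∫ ω in X ⁻¹' B ∩ S, m (X ω) ∂P ≤ (P (X ⁻¹' B ∩ S)).toReal) :
    ∀ᵐ ω ∂P, m (X ω) ∈ Set.Icc (0:ℝ) 1 := by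
  have key : ∀ (B : Set 𝓧), MeasurableSet B → ∀ δ C : ℝ, 0 < δ →
      (∀ x ∈ B, |m x| ≤ C) →
      ((∀ x ∈ B, m x ≤ -δ) ∨ (∀ x ∈ B, 1 + δ ≤ m x)) → P (X ⁻¹' B) = 0 := by
    intro B hB δ C hδ hbd hcase
    set s : Set Ω := X ⁻¹' B ∩ S with hs_def
    have hsmeas : MeasurableSet s := (hX hB).inter hS
    have hint : IntegrableOn (fun ω => m (X ω)) s P := by
      refine Integrable.mono' (integrable_const C) ((hm.comp hX).aestronglyMeasurable)
        (((ae_restrict_iff' hsmeas).2 (Filter.Eventually.of_forall fun ω hω => ?_)))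
      simpa [Real.norm_eq_abs] using hbd (X ω) hω.1
    have ht0 : (0:ℝ) ≤ (P s).toReal := ENNReal.toReal_nonneg
    have hPs : P s = 0 := by
      have htr : (P s).toReal = 0 := by
        rcases hcase with hneg | hpos
        · have h1 : ∫ ω in s, m (X ω) ∂P ≤ ∫ _ω in s, (-δ) ∂P := by
            refine setIntegral_mono_on hint (integrableOn_const (measure_ne_top _ _))
              hsmeas fun ω hω => hneg (X ω) hω.1
          rw [setIntegral_const] at h1
          have h2 := hlow B hB
          rw [← hs_def] at h2
          have : 0 ≤ (P s).toReal * (-δ) := by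
            calc (0:ℝ) ≤ ∫ ω in s, m (X ω) ∂P := h2
            _ ≤ (P s).toReal • (-δ) := h1
            _ = (P s).toReal * (-δ) := by rw [smul_eq_mul]
          nlinarith
        · have h1 : (1 + δ) * (P s).toReal ≤ ∫ ω in s, m (X ω) ∂P :=
            setIntegral_ge_of_const_le_real hsmeas (measure_ne_top _ _)
              (fun ω hω => hpos (X ω) hω.1) hint
          have h2 := hhigh B hB
          rw [← hs_def] at h2
          nlinarith
      have := (ENNReal.toReal_eq_zero_iff _).1 htr
      rcases this with h | h
      · exact h
      · exact absurd h (measure_ne_top _ _)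
    exact hcover B hB hPs
  have hneg : P {ω | m (X ω) < 0} = 0 := by
    have hsub : {ω | m (X ω) < 0} ⊆
        ⋃ n : ℕ, X ⁻¹' {x | m x ≤ -(1/(n+1)) ∧ -((n:ℝ)+1) ≤ m x} := by
      intro ω hω
      have hy : 0 < -(m (X ω)) := by simpa using hω
      obtain ⟨n, hn⟩ := exists_nat_ge (max (1 / (-(m (X ω)))) (-(m (X ω))))
      refine Set.mem_iUnion.2 ⟨n, ?_, ?_⟩
      · have hn1 : max (1 / (-(m (X ω)))) (-(m (X ω))) ≤ (n:ℝ) + 1 :=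
          le_trans hn (by norm_num)
        have h1 : 1 / (-(m (X ω))) ≤ (n:ℝ) + 1 := le_trans (le_max_left _ _) hn1
        have h2 : 1/((n:ℝ)+1) ≤ -(m (X ω)) := by
          rw [div_le_iff₀ hy] at h1
          rw [div_le_iff₀ (by positivity : (0:ℝ) < (n:ℝ)+1)]
          calc (1:ℝ) ≤ ((n:ℝ)+1) * (-(m (X ω))) := h1
          _ = (-(m (X ω))) * ((n:ℝ)+1) := mul_comm _ _
        linarith
      · have hn1 : max (1 / (-(m (X ω)))) (-(m (X ω))) ≤ (n:ℝ) + 1 :=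
          le_trans hn (by norm_num)
        have h1 : -(m (X ω)) ≤ (n:ℝ) + 1 := le_trans (le_max_right _ _) hn1
        linarith
    refine measure_mono_null hsub (measure_iUnion_null fun n => ?_)
    refine key _ ?_ (1/(n+1)) ((n:ℝ)+1) (by positivity) ?_ (Or.inl ?_)
    · exact (hm measurableSet_Iic).inter (hm measurableSet_Ici)
    · intro x hx
      have h1 := hx.1; have h2 := hx.2
      rw [abs_le]
      constructor
      · linarith
      · have : (0:ℝ) < 1/((n:ℝ)+1) := by positivity
        linarith
    · exact fun x hx => hx.1
  have hpos : P {ω | 1 < m (X ω)} = 0 := by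
    have hsub : {ω | 1 < m (X ω)} ⊆
        ⋃ n : ℕ, X ⁻¹' {x | 1 + 1/(n+1) ≤ m x ∧ m x ≤ (n:ℝ)+2} := by
      intro ω hω
      have hy : 0 < m (X ω) - 1 := by simpa using hω
      obtain ⟨n, hn⟩ := exists_nat_ge (max (1 / (m (X ω) - 1)) (m (X ω)))
      refine Set.mem_iUnion.2 ⟨n, ?_, ?_⟩
      · have hn1 : max (1 / (m (X ω) - 1)) (m (X ω)) ≤ (n:ℝ) + 1 :=
          le_trans hn (by norm_num)
        have h1 : 1 / (m (X ω) - 1) ≤ (n:ℝ) + 1 := le_trans (le_max_left _ _) hn1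
        have h2 : 1/((n:ℝ)+1) ≤ m (X ω) - 1 := by
          rw [div_le_iff₀ hy] at h1
          rw [div_le_iff₀ (by positivity : (0:ℝ) < (n:ℝ)+1)]
          calc (1:ℝ) ≤ ((n:ℝ)+1) * (m (X ω) - 1) := h1
          _ = (m (X ω) - 1) * ((n:ℝ)+1) := mul_comm _ _
        linarith
      · have hn1 : max (1 / (m (X ω) - 1)) (m (X ω)) ≤ (n:ℝ) + 1 :=
          le_trans hn (by norm_num)
        have h1 : m (X ω) ≤ (n:ℝ) + 1 := le_trans (le_max_right _ _) hn1
        linarith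
    refine measure_mono_null hsub (measure_iUnion_null fun n => ?_)
    refine key _ ?_ (1/(n+1)) ((n:ℝ)+2) (by positivity) ?_ (Or.inr ?_)
    · exact (hm measurableSet_Ici).inter (hm measurableSet_Iic)
    · intro x hx
      have h1 := hx.1; have h2 := hx.2
      rw [abs_le]
      constructor
      · have : (0:ℝ) < 1/((n:ℝ)+1) := by positivity
        linarith
      · linarith
    · exact fun x hx => hx.1
  have : P ({ω | m (X ω) < 0} ∪ {ω | 1 < m (X ω)}) = 0 :=
    measure_union_null hneg hpos
  refine measure_mono_null ?_ this
  intro ω hω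
  simp only [Set.mem_compl_iff, Set.mem_setOf_eq, Set.mem_Icc] at hω
  push_neg at hω
  by_cases h : 0 ≤ m (X ω)
  · exact Or.inr (hω h)
  · exact Or.inl (lt_of_not_ge h)

lemma main_eq (P : Measure Ω) [IsProbabilityMeasure P]
    {X : Ω → 𝓧} (hX : Measurable X)
    {ζ : Ω → ℝ} (hζ : Measurable ζ) (hζbin : ∀ ω, ζ ω = 0 ∨ ζ ω = 1)
    {ρ : 𝓧 → ℝ} (hρ : Measurable ρ) {ε : ℝ} (hε : 0 < ε)
    (hρb : ∀ x, ε ≤ ρ x ∧ ρ x ≤ 1)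
    (hπ : ∀ B : Set 𝓧, MeasurableSet B →
      ∫ ω in X ⁻¹' B, ζ ω ∂P = ∫ ω in X ⁻¹' B, ρ (X ω) ∂P)
    {W : Ω → ℝ} (hW : Measurable W) (hWr : ∀ ω, W ω ∈ Set.Icc (0:ℝ) 1)
    (hconf : ∀ B : Set 𝓧, MeasurableSet B →
      ∫ ω in X ⁻¹' B, ζ ω * W ω ∂P = ∫ ω in X ⁻¹' B, ρ (X ω) * W ω ∂P)
    {m : 𝓧 → ℝ} (hmm : Measurable m)
    (hm : ∀ B : Set 𝓧, MeasurableSet B →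
      ∫ ω in X ⁻¹' B ∩ {ω | ζ ω = 1}, W ω ∂P
        = ∫ ω in X ⁻¹' B ∩ {ω | ζ ω = 1}, m (X ω) ∂P) :
    (∀ᵐ ω ∂P, m (X ω) ∈ Set.Icc (0:ℝ) 1) ∧
    ∀ B : Set 𝓧, MeasurableSet B →
      ∫ ω in X ⁻¹' B, W ω ∂P = ∫ ω in X ⁻¹' B, m (X ω) ∂P := by
  set S : Set Ω := {ω | ζ ω = 1} with hS_def
  have hSm : MeasurableSet S := hζ (measurableSet_singleton 1)
  -- indicator property
  have hζind : ∀ h : Ω → ℝ, (fun ω => ζ ω * h ω) = S.indicator h := by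
    intro h
    funext ω
    rcases hζbin ω with h0 | h1
    · have hns : ω ∉ S := by simp [hS_def, h0]
      rw [Set.indicator_of_notMem hns, h0, zero_mul]
    · have hs : ω ∈ S := h1
      rw [Set.indicator_of_mem hs, h1, one_mul]
  have hsplit : ∀ (h : Ω → ℝ) (s : Set Ω),
      ∫ ω in s, ζ ω * h ω ∂P = ∫ ω in s ∩ S, h ω ∂P := by
    intro h s
    rw [hζind h, setIntegral_indicator hSm]
  -- integrability facts
  have hζabs : ∀ ω, |ζ ω| ≤ 1 := by
    intro ω; rcases hζbin ω with h | h <;> simp [h]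
  have hWabs : ∀ ω, |W ω| ≤ 1 := by
    intro ω; rw [abs_le]; exact ⟨by linarith [(hWr ω).1], (hWr ω).2⟩
  have hρabs : ∀ x, |ρ x| ≤ 1 := by
    intro x; rw [abs_le]; exact ⟨by linarith [(hρb x).1], (hρb x).2⟩
  have intζ : Integrable ζ P := bdd_integrable P hζ hζabs
  have intW : Integrable W P := bdd_integrable P hW hWabs
  have intρX : Integrable (fun ω => ρ (X ω)) P :=
    bdd_integrable P (hρ.comp hX) (fun ω => hρabs (X ω))
  have intρW : Integrable (fun ω => ρ (X ω) * W ω) P :=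
    bdd_integrable P ((hρ.comp hX).mul hW) (fun ω => by
      rw [abs_mul]
      calc |ρ (X ω)| * |W ω| ≤ 1 * 1 :=
        mul_le_mul (hρabs _) (hWabs _) (abs_nonneg _) zero_le_one
      _ = 1 := one_mul 1)
  -- part 1 : a.e. range of m ∘ X
  have hmae : ∀ᵐ ω ∂P, m (X ω) ∈ Set.Icc (0:ℝ) 1 := by
    refine ae_icc_of_setIntegral P hX hSm hmm ?_ ?_ ?_
    · intro B hB hnull
      have h1 : ∫ ω in X ⁻¹' B, ζ ω ∂P = (P (X ⁻¹' B ∩ S)).toReal := by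
        have h2 := hsplit (fun _ => (1:ℝ)) (X ⁻¹' B)
        simp only [mul_one] at h2
        rw [h2, setIntegral_const, smul_eq_mul, mul_one]
        rfl
      have h3 : ε * (P (X ⁻¹' B)).toReal ≤ ∫ ω in X ⁻¹' B, ρ (X ω) ∂P :=
        setIntegral_ge_of_const_le_real (hX hB) (measure_ne_top _ _)
          (fun ω _ => (hρb (X ω)).1) intρX.integrableOn
      rw [← hπ B hB, h1, hnull] at h3
      simp only [ENNReal.toReal_zero] at h3
      have h4 : (P (X ⁻¹' B)).toReal = 0 := by nlinarith [ENNReal.toReal_nonneg (a := P (X ⁻¹' B))]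
      rcases (ENNReal.toReal_eq_zero_iff _).1 h4 with h | h
      · exact h
      · exact absurd h (measure_ne_top _ _)
    · intro B hB
      rw [← hm B hB]
      exact setIntegral_nonneg ((hX hB).inter hSm) fun ω _ => (hWr ω).1
    · intro B hB
      rw [← hm B hB]
      have h1 : ∫ ω in X ⁻¹' B ∩ S, W ω ∂P ≤ ∫ _ω in X ⁻¹' B ∩ S, (1:ℝ) ∂P :=
        setIntegral_mono_on intW.integrableOn
          (integrableOn_const (measure_ne_top _ _))
          ((hX hB).inter hSm) (fun ω _ => (hWr ω).2)
      rwa [setIntegral_const, smul_eq_mul, mul_one] at h1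
  refine ⟨hmae, ?_⟩
  -- truncation
  set m' : 𝓧 → ℝ := fun x => max 0 (min 1 (m x)) with hm'_def
  have hm'meas : Measurable m' := measurable_const.max (measurable_const.min hmm)
  have hm'r : ∀ x, m' x ∈ Set.Icc (0:ℝ) 1 :=
    fun x => ⟨le_max_left _ _, max_le zero_le_one (min_le_left _ _)⟩
  have hm'abs : ∀ x, |m' x| ≤ 1 := by
    intro x; rw [abs_le]; exact ⟨by linarith [(hm'r x).1], (hm'r x).2⟩
  have hm'ae : (fun ω => m (X ω)) =ᵐ[P] fun ω => m' (X ω) := by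
    filter_upwards [hmae] with ω hω
    rw [hm'_def]
    simp only
    rw [min_eq_right hω.2, max_eq_right hω.1]
  have intm'X : Integrable (fun ω => m' (X ω)) P :=
    bdd_integrable P (hm'meas.comp hX) (fun ω => hm'abs (X ω))
  have intζm' : Integrable ((fun ω => m' (X ω)) * ζ) P :=
    bdd_integrable P ((hm'meas.comp hX).mul hζ) (fun ω => by
      simp only [Pi.mul_apply, abs_mul]
      calc |m' (X ω)| * |ζ ω| ≤ 1 * 1 :=
        mul_le_mul (hm'abs _) (hζabs _) (abs_nonneg _) zero_le_one
      _ = 1 := one_mul 1)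
  have intρm' : Integrable (fun ω => ρ (X ω) * m' (X ω)) P :=
    bdd_integrable P ((hρ.comp hX).mul (hm'meas.comp hX)) (fun ω => by
      rw [abs_mul]
      calc |ρ (X ω)| * |m' (X ω)| ≤ 1 * 1 :=
        mul_le_mul (hρabs _) (hm'abs _) (abs_nonneg _) zero_le_one
      _ = 1 := one_mul 1)
  -- conditional expectation setup
  have hcm : MeasurableSpace.comap X ‹MeasurableSpace 𝓧› ≤ ‹MeasurableSpace Ω› := hX.comap_le
  haveI : SigmaFinite (P.trim hcm) := by infer_instance
  have hXm : Measurable[(MeasurableSpace.comap X ‹MeasurableSpace 𝓧›)] X := Measurable.of_comap_le le_rfl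
  have hsets : ∀ s : Set Ω, MeasurableSet[(MeasurableSpace.comap X ‹MeasurableSpace 𝓧›)] s → ∃ B : Set 𝓧, MeasurableSet B ∧ X ⁻¹' B = s :=
    fun s hs => MeasurableSpace.measurableSet_comap.1 hs
  have hBm : ∀ (B : Set 𝓧), MeasurableSet B → MeasurableSet[(MeasurableSpace.comap X ‹MeasurableSpace 𝓧›)] (X ⁻¹' B) :=
    fun B hB => ⟨B, hB, rfl⟩
  -- condexp of ζ
  have hcondζ : (fun ω => ρ (X ω)) =ᵐ[P] P[ζ|(MeasurableSpace.comap X ‹MeasurableSpace 𝓧›)] := by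
    refine ae_eq_condExp_of_forall_setIntegral_eq hcm intζ
      (fun s _ _ => ?_) (fun s hs _ => ?_)
      ((hρ.comp hXm).stronglyMeasurable.aestronglyMeasurable)
    · exact intρX.integrableOn
    obtain ⟨B, hB, rfl⟩ := hsets s hs
    exact (hπ B hB).symm
  -- step 1 : ∫ ζ m' = ∫ ρ m' on X-sets
  have step1 : ∀ B : Set 𝓧, MeasurableSet B →
      ∫ ω in X ⁻¹' B, ζ ω * m' (X ω) ∂P = ∫ ω in X ⁻¹' B, ρ (X ω) * m' (X ω) ∂P := by
    intro B hB
    have hpull : P[(fun ω => m' (X ω)) * ζ|(MeasurableSpace.comap X ‹MeasurableSpace 𝓧›)] =ᵐ[P] (fun ω => m' (X ω)) * P[ζ|(MeasurableSpace.comap X ‹MeasurableSpace 𝓧›)] :=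
      condExp_stronglyMeasurable_mul_of_bound hcm
        (hm'meas.comp hXm).stronglyMeasurable intζ 1
        (Filter.Eventually.of_forall fun ω => by
          simpa [Real.norm_eq_abs] using hm'abs (X ω))
    calc ∫ ω in X ⁻¹' B, ζ ω * m' (X ω) ∂P
        = ∫ ω in X ⁻¹' B, ((fun ω => m' (X ω)) * ζ) ω ∂P := by
          refine integral_congr_ae (Filter.Eventually.of_forall fun ω => ?_)
          simp only [Pi.mul_apply]; exact mul_comm _ _
      _ = ∫ ω in X ⁻¹' B, (P[(fun ω => m' (X ω)) * ζ|(MeasurableSpace.comap X ‹MeasurableSpace 𝓧›)]) ω ∂P :=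
          (setIntegral_condExp hcm intζm' (hBm B hB)).symm
      _ = ∫ ω in X ⁻¹' B, m' (X ω) * (P[ζ|(MeasurableSpace.comap X ‹MeasurableSpace 𝓧›)]) ω ∂P := by
          refine integral_congr_ae (ae_restrict_of_ae ?_)
          filter_upwards [hpull] with ω hω
          simpa [Pi.mul_apply] using hω
      _ = ∫ ω in X ⁻¹' B, m' (X ω) * ρ (X ω) ∂P := by
          refine integral_congr_ae (ae_restrict_of_ae ?_)
          filter_upwards [hcondζ] with ω hω
          rw [← hω]
      _ = ∫ ω in X ⁻¹' B, ρ (X ω) * m' (X ω) ∂P := by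
          refine integral_congr_ae (Filter.Eventually.of_forall fun ω => ?_)
          exact mul_comm _ _
  -- step 2 : ∫ ρ W = ∫ ρ m' on X-sets
  have step2 : ∀ B : Set 𝓧, MeasurableSet B →
      ∫ ω in X ⁻¹' B, ρ (X ω) * m' (X ω) ∂P = ∫ ω in X ⁻¹' B, ρ (X ω) * W ω ∂P := by
    intro B hB
    calc ∫ ω in X ⁻¹' B, ρ (X ω) * m' (X ω) ∂P
        = ∫ ω in X ⁻¹' B, ζ ω * m' (X ω) ∂P := (step1 B hB).symm
      _ = ∫ ω in X ⁻¹' B ∩ S, m' (X ω) ∂P := hsplit _ _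
      _ = ∫ ω in X ⁻¹' B ∩ S, m (X ω) ∂P :=
          integral_congr_ae (ae_restrict_of_ae hm'ae.symm)
      _ = ∫ ω in X ⁻¹' B ∩ S, W ω ∂P := (hm B hB).symm
      _ = ∫ ω in X ⁻¹' B, ζ ω * W ω ∂P := (hsplit _ _).symm
      _ = ∫ ω in X ⁻¹' B, ρ (X ω) * W ω ∂P := hconf B hB
  -- step 3 : identify m' ∘ X with condexp of W
  have step3 : (fun ω => ρ (X ω) * m' (X ω)) =ᵐ[P] P[fun ω => ρ (X ω) * W ω|(MeasurableSpace.comap X ‹MeasurableSpace 𝓧›)] := by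
    refine ae_eq_condExp_of_forall_setIntegral_eq hcm intρW
      (fun s _ _ => intρm'.integrableOn) (fun s hs _ => ?_)
      (((hρ.comp hXm).mul (hm'meas.comp hXm)).stronglyMeasurable.aestronglyMeasurable)
    obtain ⟨B, hB, rfl⟩ := hsets s hs
    exact step2 B hB
  have step4 : P[(fun ω => ρ (X ω)) * W|(MeasurableSpace.comap X ‹MeasurableSpace 𝓧›)] =ᵐ[P] (fun ω => ρ (X ω)) * P[W|(MeasurableSpace.comap X ‹MeasurableSpace 𝓧›)] :=
    condExp_stronglyMeasurable_mul_of_bound hcm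
      (hρ.comp hXm).stronglyMeasurable intW 1
      (Filter.Eventually.of_forall fun ω => by
        simpa [Real.norm_eq_abs] using hρabs (X ω))
  have step5 : P[W|(MeasurableSpace.comap X ‹MeasurableSpace 𝓧›)] =ᵐ[P] fun ω => m' (X ω) := by
    have h34 : (fun ω => ρ (X ω) * m' (X ω)) =ᵐ[P] (fun ω => ρ (X ω)) * P[W|(MeasurableSpace.comap X ‹MeasurableSpace 𝓧›)] := by
      refine step3.trans (Filter.EventuallyEq.trans ?_ step4)
      refine condExp_congr_ae (Filter.Eventually.of_forall fun ω => ?_)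
      simp [Pi.mul_apply]
    filter_upwards [h34] with ω hω
    have hρne : ρ (X ω) ≠ 0 := by
      have := (hρb (X ω)).1; intro h; rw [h] at this; linarith
    have : ρ (X ω) * m' (X ω) = ρ (X ω) * (P[W|(MeasurableSpace.comap X ‹MeasurableSpace 𝓧›)]) ω := by
      simpa [Pi.mul_apply] using hω
    exact (mul_left_cancel₀ hρne this).symm
  intro B hB
  calc ∫ ω in X ⁻¹' B, W ω ∂P
      = ∫ ω in X ⁻¹' B, (P[W|(MeasurableSpace.comap X ‹MeasurableSpace 𝓧›)]) ω ∂P := (setIntegral_condExp hcm intW (hBm B hB)).symm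
    _ = ∫ ω in X ⁻¹' B, m' (X ω) ∂P := by
        refine integral_congr_ae (ae_restrict_of_ae ?_)
        filter_upwards [step5] with ω h
        exact h
    _ = ∫ ω in X ⁻¹' B, m (X ω) ∂P := integral_congr_ae (ae_restrict_of_ae hm'ae.symm)

end IVAux

/-- nonparametric IV bounds on the subgroup average treatment effect.
Potential treatments A1, A0 (under Z=1, Z=0) and potential outcomes Y1, Y0 (under a=1,
a=0; the exclusion restriction is built in), consistency defines observed A and Y,
positivity and unconfoundedness of Z given X are stated via a version π₁ of P(Z=1|X),
strong monotonicity holds, and mU1, mU0, mL1, mL0 are versions of the conditional means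
E(YA+1-A|X,Z=1), E(Y(1-A)|X,Z=0), E(YA|X,Z=1), E(Y(1-A)+A|X,Z=0). Then
β_l(g) ≤ β(g) ≤ β_u(g) for any identifiable subgroup g with P(g(X)=1) > 0. -/
theorem iv_subgroup_effect_bounds
    {Ω 𝓧 : Type*} [MeasurableSpace Ω] [MeasurableSpace 𝓧]
    (P : Measure Ω) [IsProbabilityMeasure P]
    (X : Ω → 𝓧) (hX : Measurable X)
    (Z A1 A0 Y1 Y0 : Ω → ℝ)
    (hZ : Measurable Z) (hA1 : Measurable A1) (hA0 : Measurable A0)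
    (hY1 : Measurable Y1) (hY0 : Measurable Y0)
    (hZbin : ∀ ω, Z ω = 0 ∨ Z ω = 1)
    (hA1bin : ∀ ω, A1 ω = 0 ∨ A1 ω = 1)
    (hA0bin : ∀ ω, A0 ω = 0 ∨ A0 ω = 1)
    (hY1r : ∀ ω, Y1 ω ∈ Set.Icc (0:ℝ) 1)
    (hY0r : ∀ ω, Y0 ω ∈ Set.Icc (0:ℝ) 1)
    (A : Ω → ℝ) (hAdef : A = fun ω => Z ω * A1 ω + (1 - Z ω) * A0 ω)
    (Y : Ω → ℝ) (hYdef : Y = fun ω => A ω * Y1 ω + (1 - A ω) * Y0 ω)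
    (ε : ℝ) (hε : 0 < ε)
    (π₁ : 𝓧 → ℝ) (hπmeas : Measurable π₁)
    (hpos : ∀ x, ε ≤ π₁ x ∧ π₁ x ≤ 1 - ε)
    (hπ : ∀ B : Set 𝓧, MeasurableSet B →
      ∫ ω in X ⁻¹' B, Z ω ∂P = ∫ ω in X ⁻¹' B, π₁ (X ω) ∂P)
    (hunconf : ∀ φ : ℝ × ℝ × ℝ × ℝ → ℝ, Measurable φ → (∀ w, |φ w| ≤ 1) →
      ∀ B : Set 𝓧, MeasurableSet B →
        ∫ ω in X ⁻¹' B, Z ω * φ (A1 ω, A0 ω, Y1 ω, Y0 ω) ∂P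
          = ∫ ω in X ⁻¹' B, π₁ (X ω) * φ (A1 ω, A0 ω, Y1 ω, Y0 ω) ∂P)
    (hmono : ∀ ω, A0 ω ≤ A1 ω)
    (hstrong : ENNReal.ofReal ε ≤ P {ω | A1 ω = 1 ∧ A0 ω = 0})
    (mU1 mU0 mL1 mL0 : 𝓧 → ℝ)
    (hmU1meas : Measurable mU1) (hmU0meas : Measurable mU0)
    (hmL1meas : Measurable mL1) (hmL0meas : Measurable mL0)
    (hmU1 : ∀ B : Set 𝓧, MeasurableSet B →
      ∫ ω in X ⁻¹' B ∩ {ω | Z ω = 1}, (Y ω * A ω + (1 - A ω)) ∂P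
        = ∫ ω in X ⁻¹' B ∩ {ω | Z ω = 1}, mU1 (X ω) ∂P)
    (hmU0 : ∀ B : Set 𝓧, MeasurableSet B →
      ∫ ω in X ⁻¹' B ∩ {ω | Z ω = 0}, (Y ω * (1 - A ω)) ∂P
        = ∫ ω in X ⁻¹' B ∩ {ω | Z ω = 0}, mU0 (X ω) ∂P)
    (hmL1 : ∀ B : Set 𝓧, MeasurableSet B →
      ∫ ω in X ⁻¹' B ∩ {ω | Z ω = 1}, (Y ω * A ω) ∂P
        = ∫ ω in X ⁻¹' B ∩ {ω | Z ω = 1}, mL1 (X ω) ∂P)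
    (hmL0 : ∀ B : Set 𝓧, MeasurableSet B →
      ∫ ω in X ⁻¹' B ∩ {ω | Z ω = 0}, (Y ω * (1 - A ω) + A ω) ∂P
        = ∫ ω in X ⁻¹' B ∩ {ω | Z ω = 0}, mL0 (X ω) ∂P)
    (g : 𝓧 → ℝ) (hg : Measurable g) (hgbin : ∀ x, g x = 0 ∨ g x = 1)
    (G : Set Ω) (hG : G = {ω | g (X ω) = 1})
    (hGpos : 0 < P G) :
    (∫ ω in G, (mL1 (X ω) - mL0 (X ω)) ∂P) / (P G).toReal
        ≤ (∫ ω in G, (Y1 ω - Y0 ω) ∂P) / (P G).toReal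
    ∧ (∫ ω in G, (Y1 ω - Y0 ω) ∂P) / (P G).toReal
        ≤ (∫ ω in G, (mU1 (X ω) - mU0 (X ω)) ∂P) / (P G).toReal := by
    classical
  -- basic measurability and integrability
  have hA : Measurable A := by
    rw [hAdef]; exact (hZ.mul hA1).add ((measurable_const.sub hZ).mul hA0)
  have hYm : Measurable Y := by
    rw [hYdef]; exact (hA.mul hY1).add ((measurable_const.sub hA).mul hY0)
  have hZ1set : MeasurableSet {ω | Z ω = 1} := hZ (measurableSet_singleton 1)
  have hZ0set : MeasurableSet {ω | Z ω = 0} := hZ (measurableSet_singleton 0)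
  have hZabs : ∀ ω, |Z ω| ≤ 1 := fun ω => by rcases hZbin ω with h | h <;> simp [h]
  have intZ : Integrable Z P := IVAux.bdd_integrable P hZ hZabs
  have hπabs : ∀ x, |π₁ x| ≤ 1 := fun x => by
    rw [abs_le]
    exact ⟨by linarith [(hpos x).1], by linarith [(hpos x).2]⟩
  have intπX : Integrable (fun ω => π₁ (X ω)) P :=
    IVAux.bdd_integrable P (hπmeas.comp hX) fun ω => hπabs (X ω)
  have intY1 : Integrable Y1 P := IVAux.bdd_integrable P hY1 fun ω => by
    rw [abs_le]; exact ⟨by linarith [(hY1r ω).1], (hY1r ω).2⟩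
  have intY0 : Integrable Y0 P := IVAux.bdd_integrable P hY0 fun ω => by
    rw [abs_le]; exact ⟨by linarith [(hY0r ω).1], (hY0r ω).2⟩
  have hπ1le : ∀ x, ε ≤ π₁ x ∧ π₁ x ≤ 1 := fun x => ⟨(hpos x).1, by linarith [(hpos x).2]⟩
  have hπ0le : ∀ x, ε ≤ 1 - π₁ x ∧ 1 - π₁ x ≤ 1 :=
    fun x => ⟨by linarith [(hpos x).2], by linarith [(hpos x).1, hε]⟩
  have hζ0m : Measurable (fun ω => 1 - Z ω) := measurable_const.sub hZ
  have hζ0bin : ∀ ω, 1 - Z ω = 0 ∨ 1 - Z ω = 1 := fun ω => by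
    rcases hZbin ω with h | h <;> simp [h]
  have hρ0m : Measurable (fun x => 1 - π₁ x) := measurable_const.sub hπmeas
  have hsetZ0 : ({ω | 1 - Z ω = 1} : Set Ω) = {ω | Z ω = 0} := by
    ext ω; simp [sub_eq_self]
  -- instrument marginal for 1 - Z
  have hπ0 : ∀ B : Set 𝓧, MeasurableSet B →
      ∫ ω in X ⁻¹' B, (1 - Z ω) ∂P = ∫ ω in X ⁻¹' B, (1 - π₁ (X ω)) ∂P := by
    intro B hB
    rw [integral_sub (integrable_const 1) intZ.integrableOn,
      integral_sub (integrable_const 1) intπX.integrableOn, hπ B hB]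
  -- generic unconfoundedness transfer for 1 - Z
  have hconf0gen : ∀ W : Ω → ℝ, Measurable W → (∀ ω, |W ω| ≤ 1) →
      (∀ B : Set 𝓧, MeasurableSet B →
        ∫ ω in X ⁻¹' B, Z ω * W ω ∂P = ∫ ω in X ⁻¹' B, π₁ (X ω) * W ω ∂P) →
      ∀ B : Set 𝓧, MeasurableSet B →
        ∫ ω in X ⁻¹' B, (1 - Z ω) * W ω ∂P = ∫ ω in X ⁻¹' B, (1 - π₁ (X ω)) * W ω ∂P := by
    intro W hWm hWabs h1 B hB
    have intW : Integrable W P := IVAux.bdd_integrable P hWm hWabs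
    have intZW : Integrable (fun ω => Z ω * W ω) P :=
      IVAux.bdd_integrable P (hZ.mul hWm) fun ω => by
        rw [abs_mul]
        calc |Z ω| * |W ω| ≤ 1 * 1 :=
          mul_le_mul (hZabs ω) (hWabs ω) (abs_nonneg _) zero_le_one
        _ = 1 := one_mul 1
    have intπW : Integrable (fun ω => π₁ (X ω) * W ω) P :=
      IVAux.bdd_integrable P ((hπmeas.comp hX).mul hWm) fun ω => by
        rw [abs_mul]
        calc |π₁ (X ω)| * |W ω| ≤ 1 * 1 :=
          mul_le_mul (hπabs (X ω)) (hWabs ω) (abs_nonneg _) zero_le_one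
        _ = 1 := one_mul 1
    simp only [sub_mul, one_mul]
    rw [integral_sub intW.integrableOn intZW.integrableOn,
      integral_sub intW.integrableOn intπW.integrableOn, h1 B hB]
  -- the four bounded observable functionals
  -- WU1 = clamp (A1*Y1 + (1-A1)), WU0 = clamp ((1-A0)*Y0),
  -- WL1 = clamp (A1*Y1), WL0 = clamp ((1-A0)*Y0 + A0)
  have hvalU1 : ∀ ω, IVAux.clamp (A1 ω * Y1 ω + (1 - A1 ω)) = A1 ω * Y1 ω + (1 - A1 ω) := by
    intro ω
    apply IVAux.clamp_eq <;> rcases hA1bin ω with h | h <;> rw [h] <;>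
      nlinarith [(hY1r ω).1, (hY1r ω).2]
  have hvalU0 : ∀ ω, IVAux.clamp ((1 - A0 ω) * Y0 ω) = (1 - A0 ω) * Y0 ω := by
    intro ω
    apply IVAux.clamp_eq <;> rcases hA0bin ω with h | h <;> rw [h] <;>
      nlinarith [(hY0r ω).1, (hY0r ω).2]
  have hvalL1 : ∀ ω, IVAux.clamp (A1 ω * Y1 ω) = A1 ω * Y1 ω := by
    intro ω
    apply IVAux.clamp_eq <;> rcases hA1bin ω with h | h <;> rw [h] <;>
      nlinarith [(hY1r ω).1, (hY1r ω).2]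
  have hvalL0 : ∀ ω, IVAux.clamp ((1 - A0 ω) * Y0 ω + A0 ω) = (1 - A0 ω) * Y0 ω + A0 ω := by
    intro ω
    apply IVAux.clamp_eq <;> rcases hA0bin ω with h | h <;> rw [h] <;>
      nlinarith [(hY0r ω).1, (hY0r ω).2]
  have hWU1m : Measurable (fun ω => IVAux.clamp (A1 ω * Y1 ω + (1 - A1 ω))) :=
    IVAux.measurable_clamp.comp ((hA1.mul hY1).add (measurable_const.sub hA1))
  have hWU0m : Measurable (fun ω => IVAux.clamp ((1 - A0 ω) * Y0 ω)) :=
    IVAux.measurable_clamp.comp ((measurable_const.sub hA0).mul hY0)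
  have hWL1m : Measurable (fun ω => IVAux.clamp (A1 ω * Y1 ω)) :=
    IVAux.measurable_clamp.comp (hA1.mul hY1)
  have hWL0m : Measurable (fun ω => IVAux.clamp ((1 - A0 ω) * Y0 ω + A0 ω)) :=
    IVAux.measurable_clamp.comp (((measurable_const.sub hA0).mul hY0).add hA0)
  -- unconfoundedness for each W, with Z
  have hconfU1 : ∀ B : Set 𝓧, MeasurableSet B →
      ∫ ω in X ⁻¹' B, Z ω * IVAux.clamp (A1 ω * Y1 ω + (1 - A1 ω)) ∂P
        = ∫ ω in X ⁻¹' B, π₁ (X ω) * IVAux.clamp (A1 ω * Y1 ω + (1 - A1 ω)) ∂P := by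
    intro B hB
    have h := hunconf (fun w => IVAux.clamp (w.1 * w.2.2.1 + (1 - w.1)))
      (IVAux.measurable_clamp.comp (by fun_prop)) (fun w => IVAux.clamp_abs_le _) B hB
    simpa using h
  have hconfU0 : ∀ B : Set 𝓧, MeasurableSet B →
      ∫ ω in X ⁻¹' B, Z ω * IVAux.clamp ((1 - A0 ω) * Y0 ω) ∂P
        = ∫ ω in X ⁻¹' B, π₁ (X ω) * IVAux.clamp ((1 - A0 ω) * Y0 ω) ∂P := by
    intro B hB
    have h := hunconf (fun w => IVAux.clamp ((1 - w.2.1) * w.2.2.2))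
      (IVAux.measurable_clamp.comp (by fun_prop)) (fun w => IVAux.clamp_abs_le _) B hB
    simpa using h
  have hconfL1 : ∀ B : Set 𝓧, MeasurableSet B →
      ∫ ω in X ⁻¹' B, Z ω * IVAux.clamp (A1 ω * Y1 ω) ∂P
        = ∫ ω in X ⁻¹' B, π₁ (X ω) * IVAux.clamp (A1 ω * Y1 ω) ∂P := by
    intro B hB
    have h := hunconf (fun w => IVAux.clamp (w.1 * w.2.2.1))
      (IVAux.measurable_clamp.comp (by fun_prop)) (fun w => IVAux.clamp_abs_le _) B hB
    simpa using h
  have hconfL0 : ∀ B : Set 𝓧, MeasurableSet B →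
      ∫ ω in X ⁻¹' B, Z ω * IVAux.clamp ((1 - A0 ω) * Y0 ω + A0 ω) ∂P
        = ∫ ω in X ⁻¹' B, π₁ (X ω) * IVAux.clamp ((1 - A0 ω) * Y0 ω + A0 ω) ∂P := by
    intro B hB
    have h := hunconf (fun w => IVAux.clamp ((1 - w.2.1) * w.2.2.2 + w.2.1))
      (IVAux.measurable_clamp.comp (by fun_prop)) (fun w => IVAux.clamp_abs_le _) B hB
    simpa using h
  -- conditional mean identities rewritten for the W's
  have hmU1' : ∀ B : Set 𝓧, MeasurableSet B →
      ∫ ω in X ⁻¹' B ∩ {ω | Z ω = 1}, IVAux.clamp (A1 ω * Y1 ω + (1 - A1 ω)) ∂P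
        = ∫ ω in X ⁻¹' B ∩ {ω | Z ω = 1}, mU1 (X ω) ∂P := by
    intro B hB
    rw [← hmU1 B hB]
    refine setIntegral_congr_fun ((hX hB).inter hZ1set) fun ω hω => ?_
    have hz : Z ω = 1 := hω.2
    have ha : A ω = A1 ω := by rw [hAdef]; simp [hz]
    have hy : Y ω = A1 ω * Y1 ω + (1 - A1 ω) * Y0 ω := by rw [hYdef]; simp [ha]
    rcases hA1bin ω with h | h <;> rw [hvalU1 ω, hy, ha, h] <;> ring
  have hmL1' : ∀ B : Set 𝓧, MeasurableSet B →
      ∫ ω in X ⁻¹' B ∩ {ω | Z ω = 1}, IVAux.clamp (A1 ω * Y1 ω) ∂P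
        = ∫ ω in X ⁻¹' B ∩ {ω | Z ω = 1}, mL1 (X ω) ∂P := by
    intro B hB
    rw [← hmL1 B hB]
    refine setIntegral_congr_fun ((hX hB).inter hZ1set) fun ω hω => ?_
    have hz : Z ω = 1 := hω.2
    have ha : A ω = A1 ω := by rw [hAdef]; simp [hz]
    have hy : Y ω = A1 ω * Y1 ω + (1 - A1 ω) * Y0 ω := by rw [hYdef]; simp [ha]
    rcases hA1bin ω with h | h <;> rw [hvalL1 ω, hy, ha, h] <;> ring
  have hmU0' : ∀ B : Set 𝓧, MeasurableSet B →
      ∫ ω in X ⁻¹' B ∩ {ω | 1 - Z ω = 1}, IVAux.clamp ((1 - A0 ω) * Y0 ω) ∂P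
        = ∫ ω in X ⁻¹' B ∩ {ω | 1 - Z ω = 1}, mU0 (X ω) ∂P := by
    intro B hB
    rw [hsetZ0, ← hmU0 B hB]
    refine setIntegral_congr_fun ((hX hB).inter hZ0set) fun ω hω => ?_
    have hz : Z ω = 0 := hω.2
    have ha : A ω = A0 ω := by rw [hAdef]; simp [hz]
    have hy : Y ω = A0 ω * Y1 ω + (1 - A0 ω) * Y0 ω := by rw [hYdef]; simp [ha]
    rcases hA0bin ω with h | h <;> rw [hvalU0 ω, hy, ha, h] <;> ring
  have hmL0' : ∀ B : Set 𝓧, MeasurableSet B →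
      ∫ ω in X ⁻¹' B ∩ {ω | 1 - Z ω = 1}, IVAux.clamp ((1 - A0 ω) * Y0 ω + A0 ω) ∂P
        = ∫ ω in X ⁻¹' B ∩ {ω | 1 - Z ω = 1}, mL0 (X ω) ∂P := by
    intro B hB
    rw [hsetZ0, ← hmL0 B hB]
    refine setIntegral_congr_fun ((hX hB).inter hZ0set) fun ω hω => ?_
    have hz : Z ω = 0 := hω.2
    have ha : A ω = A0 ω := by rw [hAdef]; simp [hz]
    have hy : Y ω = A0 ω * Y1 ω + (1 - A0 ω) * Y0 ω := by rw [hYdef]; simp [ha]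
    rcases hA0bin ω with h | h <;> rw [hvalL0 ω, hy, ha, h] <;> ring
  -- apply the main identification lemma
  obtain ⟨aeU1, eqU1⟩ := IVAux.main_eq P hX hZ hZbin hπmeas hε hπ1le hπ
    hWU1m (fun ω => IVAux.clamp_mem _) hconfU1 hmU1meas hmU1'
  obtain ⟨aeL1, eqL1⟩ := IVAux.main_eq P hX hZ hZbin hπmeas hε hπ1le hπ
    hWL1m (fun ω => IVAux.clamp_mem _) hconfL1 hmL1meas hmL1'
  obtain ⟨aeU0, eqU0⟩ := IVAux.main_eq P hX hζ0m hζ0bin hρ0m hε hπ0le hπ0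
    hWU0m (fun ω => IVAux.clamp_mem _)
    (hconf0gen _ hWU0m (fun ω => IVAux.clamp_abs_le _) hconfU0) hmU0meas hmU0'
  obtain ⟨aeL0, eqL0⟩ := IVAux.main_eq P hX hζ0m hζ0bin hρ0m hε hπ0le hπ0
    hWL0m (fun ω => IVAux.clamp_mem _)
    (hconf0gen _ hWL0m (fun ω => IVAux.clamp_abs_le _) hconfL0) hmL0meas hmL0'
  -- subgroup set
  have hBgmeas : MeasurableSet {x | g x = 1} := hg (measurableSet_singleton 1)
  have hGpre : G = X ⁻¹' {x | g x = 1} := by rw [hG]; rfl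
  have hGmeas : MeasurableSet G := by rw [hGpre]; exact hX hBgmeas
  have EU1 : ∫ ω in G, IVAux.clamp (A1 ω * Y1 ω + (1 - A1 ω)) ∂P = ∫ ω in G, mU1 (X ω) ∂P := by
    rw [hGpre]; exact eqU1 _ hBgmeas
  have EU0 : ∫ ω in G, IVAux.clamp ((1 - A0 ω) * Y0 ω) ∂P = ∫ ω in G, mU0 (X ω) ∂P := by
    rw [hGpre]; exact eqU0 _ hBgmeas
  have EL1 : ∫ ω in G, IVAux.clamp (A1 ω * Y1 ω) ∂P = ∫ ω in G, mL1 (X ω) ∂P := by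
    rw [hGpre]; exact eqL1 _ hBgmeas
  have EL0 : ∫ ω in G, IVAux.clamp ((1 - A0 ω) * Y0 ω + A0 ω) ∂P = ∫ ω in G, mL0 (X ω) ∂P := by
    rw [hGpre]; exact eqL0 _ hBgmeas
  -- integrability on G
  have intmG : ∀ (m : 𝓧 → ℝ), Measurable m → (∀ᵐ ω ∂P, m (X ω) ∈ Set.Icc (0:ℝ) 1) →
      Integrable (fun ω => m (X ω)) P := by
    intro m hmm hae
    refine (integrable_const (1:ℝ)).mono' (hmm.comp hX).aestronglyMeasurable ?_
    filter_upwards [hae] with ω h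
    rw [Real.norm_eq_abs, abs_le]
    exact ⟨by linarith [h.1], h.2⟩
  have intmU1 := intmG mU1 hmU1meas aeU1
  have intmU0 := intmG mU0 hmU0meas aeU0
  have intmL1 := intmG mL1 hmL1meas aeL1
  have intmL0 := intmG mL0 hmL0meas aeL0
  have intWU1 : Integrable (fun ω => IVAux.clamp (A1 ω * Y1 ω + (1 - A1 ω))) P :=
    IVAux.bdd_integrable P hWU1m fun ω => IVAux.clamp_abs_le _
  have intWU0 : Integrable (fun ω => IVAux.clamp ((1 - A0 ω) * Y0 ω)) P :=
    IVAux.bdd_integrable P hWU0m fun ω => IVAux.clamp_abs_le _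
  have intWL1 : Integrable (fun ω => IVAux.clamp (A1 ω * Y1 ω)) P :=
    IVAux.bdd_integrable P hWL1m fun ω => IVAux.clamp_abs_le _
  have intWL0 : Integrable (fun ω => IVAux.clamp ((1 - A0 ω) * Y0 ω + A0 ω)) P :=
    IVAux.bdd_integrable P hWL0m fun ω => IVAux.clamp_abs_le _
  -- numerator inequalities
  have hup : ∫ ω in G, (Y1 ω - Y0 ω) ∂P ≤ ∫ ω in G, (mU1 (X ω) - mU0 (X ω)) ∂P := by
    calc ∫ ω in G, (Y1 ω - Y0 ω) ∂P
        ≤ ∫ ω in G, (IVAux.clamp (A1 ω * Y1 ω + (1 - A1 ω))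
            - IVAux.clamp ((1 - A0 ω) * Y0 ω)) ∂P := by
          refine setIntegral_mono_on (intY1.sub intY0).integrableOn
            (intWU1.sub intWU0).integrableOn hGmeas fun ω _ => ?_
          rw [hvalU1 ω, hvalU0 ω]
          rcases hA1bin ω with h1 | h1 <;> rcases hA0bin ω with h0 | h0 <;>
            rw [h1, h0] <;>
            nlinarith [(hY1r ω).1, (hY1r ω).2, (hY0r ω).1, (hY0r ω).2]
      _ = ∫ ω in G, IVAux.clamp (A1 ω * Y1 ω + (1 - A1 ω)) ∂P
            - ∫ ω in G, IVAux.clamp ((1 - A0 ω) * Y0 ω) ∂P :=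
          integral_sub intWU1.integrableOn intWU0.integrableOn
      _ = ∫ ω in G, mU1 (X ω) ∂P - ∫ ω in G, mU0 (X ω) ∂P := by rw [EU1, EU0]
      _ = ∫ ω in G, (mU1 (X ω) - mU0 (X ω)) ∂P :=
          (integral_sub intmU1.integrableOn intmU0.integrableOn).symm
  have hlo : ∫ ω in G, (mL1 (X ω) - mL0 (X ω)) ∂P ≤ ∫ ω in G, (Y1 ω - Y0 ω) ∂P := by
    calc ∫ ω in G, (mL1 (X ω) - mL0 (X ω)) ∂P
        = ∫ ω in G, mL1 (X ω) ∂P - ∫ ω in G, mL0 (X ω) ∂P :=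
          integral_sub intmL1.integrableOn intmL0.integrableOn
      _ = ∫ ω in G, IVAux.clamp (A1 ω * Y1 ω) ∂P
            - ∫ ω in G, IVAux.clamp ((1 - A0 ω) * Y0 ω + A0 ω) ∂P := by rw [EL1, EL0]
      _ = ∫ ω in G, (IVAux.clamp (A1 ω * Y1 ω)
            - IVAux.clamp ((1 - A0 ω) * Y0 ω + A0 ω)) ∂P :=
          (integral_sub intWL1.integrableOn intWL0.integrableOn).symm
      _ ≤ ∫ ω in G, (Y1 ω - Y0 ω) ∂P := by
          refine setIntegral_mono_on (intWL1.sub intWL0).integrableOn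
            (intY1.sub intY0).integrableOn hGmeas fun ω _ => ?_
          rw [hvalL1 ω, hvalL0 ω]
          rcases hA1bin ω with h1 | h1 <;> rcases hA0bin ω with h0 | h0 <;>
            rw [h1, h0] <;>
            nlinarith [(hY1r ω).1, (hY1r ω).2, (hY0r ω).1, (hY0r ω).2]
  have hPGpos : 0 < (P G).toReal :=
    ENNReal.toReal_pos hGpos.ne' (measure_ne_top _ _)
  constructor
  · exact div_le_div_of_nonneg_right hlo hPGpos.le |>.trans_eq rfl
  · exact div_le_div_of_nonneg_right hup hPGpos.le |>.trans_eq rfl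
end

section
/- Let μ = E[γ(X)] ∈ (0,1) and for any classifier h with E[h(X)] > 0 define ψ(h) = cov(C,h)/var(C) and bound length ℓ(h) = 1 − E[γ(X) | h(X)=1]. Then ℓ(h) = (1−μ)(1 − μ ψ(h)/E[h]). In particular, for the quantile classifier h_q with E[h_q] = μ and sharpness ψ = ψ(h_q), one has E(h_q) = 2μ(1−μ)(1−ψ) and ℓ(h_q) = (1−μ)(1−ψ). -/
open MeasureTheory

private lemma integrable_of_abs_le_one {Ω : Type*} [MeasurableSpace Ω]
    (P : Measure Ω) [IsFiniteMeasure P] {f : Ω → ℝ}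
    (hf : Measurable f) (hb : ∀ ω, |f ω| ≤ 1) : Integrable f P :=
  (integrable_const (1 : ℝ)).mono' hf.aestronglyMeasurable (Filter.Eventually.of_forall hb)

/-- ℓ(h) = (1-μ)(1 - μψ(h)/E[h]) for any classifier with E[h(X)] > 0, and
for the quantile classifier h_q (with E[h_q(X)] = μ): E(h_q) = 2μ(1-μ)(1-ψ) and
ℓ(h_q) = (1-μ)(1-ψ), where ψ = ψ(h_q) is the sharpness. -/
theorem bound_length_sharpness_relations
    {Ω 𝓧 : Type*} [MeasurableSpace Ω] [MeasurableSpace 𝓧]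
    (P : Measure Ω) [IsProbabilityMeasure P]
    (X : Ω → 𝓧) (hX : Measurable X)
    (γ : 𝓧 → ℝ) (hγ : Measurable γ) (hγ01 : ∀ x, γ x ∈ Set.Icc (0:ℝ) 1)
    (C : Ω → ℝ) (hC : Measurable C) (hCbin : ∀ ω, C ω = 0 ∨ C ω = 1)
    (hcond : ∀ B : Set 𝓧, MeasurableSet B →
      ∫ ω in X ⁻¹' B, C ω ∂P = ∫ ω in X ⁻¹' B, γ (X ω) ∂P)
    (μ : ℝ) (hμ : μ = ∫ ω, γ (X ω) ∂P) (hμ0 : 0 < μ) (hμ1 : μ < 1)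
    (h : 𝓧 → ℝ) (hh : Measurable h) (hhbin : ∀ x, h x = 0 ∨ h x = 1)
    (η : ℝ) (hη : η = ∫ ω, h (X ω) ∂P) (hηpos : 0 < η)
    (ψh : ℝ) (hψh : ψh = (∫ ω, (γ (X ω) - μ) * h (X ω) ∂P) / (μ * (1 - μ)))
    (q : ℝ) (hq : P {ω | γ (X ω) > q} = ENNReal.ofReal μ)
    (ψ : ℝ) (hψ : ψ = (∫ ω, (γ (X ω) - μ) * (if γ (X ω) > q then (1:ℝ) else 0) ∂P)
        / (μ * (1 - μ))) :
    (1 - (∫ ω in {ω | h (X ω) = 1}, γ (X ω) ∂P) / η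
        = (1 - μ) * (1 - μ * ψh / η))
    ∧ ((P {ω | C ω ≠ (if γ (X ω) > q then (1:ℝ) else 0)}).toReal
        = 2 * μ * (1 - μ) * (1 - ψ))
    ∧ (1 - (∫ ω in {ω | γ (X ω) > q}, γ (X ω) ∂P) / μ
        = (1 - μ) * (1 - ψ)) := by
  have hμne : μ ≠ 0 := hμ0.ne'
  have h1μne : (1 : ℝ) - μ ≠ 0 := by linarith
  have hηne : η ≠ 0 := hηpos.ne'
  -- basic measurability / integrability
  have hfm : Measurable fun ω => γ (X ω) := hγ.comp hX
  have hfb : ∀ ω, |γ (X ω)| ≤ 1 := fun ω => by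
    have := hγ01 (X ω); rw [abs_le]; constructor <;> [linarith [this.1]; exact this.2]
  have hfint : Integrable (fun ω => γ (X ω)) P := integrable_of_abs_le_one P hfm hfb
  have hhm : Measurable fun ω => h (X ω) := hh.comp hX
  have hhb : ∀ ω, |h (X ω)| ≤ 1 := fun ω => by
    rcases hhbin (X ω) with h0 | h0 <;> simp [h0]
  have hhint : Integrable (fun ω => h (X ω)) P := integrable_of_abs_le_one P hhm hhb
  have hCb : ∀ ω, |C ω| ≤ 1 := fun ω => by
    rcases hCbin ω with h0 | h0 <;> simp [h0]
  have hCint : Integrable C P := integrable_of_abs_le_one P hC hCb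
  -- the quantile set
  set S : Set Ω := {ω | γ (X ω) > q} with hS
  have hSmeas : MeasurableSet S := hfm measurableSet_Ioi
  set d : Ω → ℝ := fun ω => if γ (X ω) > q then (1 : ℝ) else 0 with hd
  have hdm : Measurable d := Measurable.ite hSmeas measurable_const measurable_const
  have hdb : ∀ ω, |d ω| ≤ 1 := fun ω => by by_cases hω : γ (X ω) > q <;> simp [hd, hω]
  have hdint : Integrable d P := integrable_of_abs_le_one P hdm hdb
  -- products
  have hfhint : Integrable (fun ω => γ (X ω) * h (X ω)) P :=
    integrable_of_abs_le_one P (hfm.mul hhm) fun ω => by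
      rw [abs_mul]
      calc |γ (X ω)| * |h (X ω)| ≤ 1 * 1 :=
            mul_le_mul (hfb ω) (hhb ω) (abs_nonneg _) zero_le_one
        _ = 1 := one_mul 1
  have hfdint : Integrable (fun ω => γ (X ω) * d ω) P :=
    integrable_of_abs_le_one P (hfm.mul hdm) fun ω => by
      rw [abs_mul]
      calc |γ (X ω)| * |d ω| ≤ 1 * 1 :=
            mul_le_mul (hfb ω) (hdb ω) (abs_nonneg _) zero_le_one
        _ = 1 := one_mul 1
  have hCdint : Integrable (fun ω => C ω * d ω) P :=
    integrable_of_abs_le_one P (hC.mul hdm) fun ω => by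
      rw [abs_mul]
      calc |C ω| * |d ω| ≤ 1 * 1 :=
            mul_le_mul (hCb ω) (hdb ω) (abs_nonneg _) zero_le_one
        _ = 1 := one_mul 1
  -- E[d] = μ
  have hPS : (P S).toReal = μ := by rw [hS, hq, ENNReal.toReal_ofReal hμ0.le]
  have hdeq : d = S.indicator (fun _ => (1 : ℝ)) := by
    funext ω; by_cases hω : γ (X ω) > q <;>
      simp [hd, hω, Set.indicator, hS, Set.mem_setOf_eq]
  have hEd : ∫ ω, d ω ∂P = μ := by
    rw [hdeq, integral_indicator_const (1 : ℝ) hSmeas, smul_eq_mul, mul_one]; exact hPS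
  -- PART 1
  have hHset : MeasurableSet {ω | h (X ω) = 1} := hhm (measurableSet_singleton 1)
  have e1 : ∫ ω in {ω | h (X ω) = 1}, γ (X ω) ∂P = ∫ ω, γ (X ω) * h (X ω) ∂P := by
    rw [← integral_indicator hHset]
    congr 1; funext ω
    rcases hhbin (X ω) with h0 | h0 <;>
      simp [Set.indicator, Set.mem_setOf_eq, h0]
  have e2 : ∫ ω, (γ (X ω) - μ) * h (X ω) ∂P
      = (∫ ω, γ (X ω) * h (X ω) ∂P) - μ * η := by
    have : (fun ω => (γ (X ω) - μ) * h (X ω))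
        = fun ω => γ (X ω) * h (X ω) - μ * h (X ω) := by funext ω; ring
    rw [this, integral_sub hfhint (hhint.const_mul μ), integral_const_mul, hη]
  have part1 : 1 - (∫ ω in {ω | h (X ω) = 1}, γ (X ω) ∂P) / η
      = (1 - μ) * (1 - μ * ψh / η) := by
    rw [e1, hψh, e2]
    field_simp
    ring
  -- PART 3
  have e3 : ∫ ω in S, γ (X ω) ∂P = ∫ ω, γ (X ω) * d ω ∂P := by
    rw [← integral_indicator hSmeas]
    congr 1; funext ω
    by_cases hω : γ (X ω) > q <;>
      simp [Set.indicator, hS, Set.mem_setOf_eq, hd, hω]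
  have e4 : ∫ ω, (γ (X ω) - μ) * d ω ∂P = (∫ ω, γ (X ω) * d ω ∂P) - μ * μ := by
    have : (fun ω => (γ (X ω) - μ) * d ω)
        = fun ω => γ (X ω) * d ω - μ * d ω := by funext ω; ring
    rw [this, integral_sub hfdint (hdint.const_mul μ), integral_const_mul, hEd]
  have part3 : 1 - (∫ ω in S, γ (X ω) ∂P) / μ = (1 - μ) * (1 - ψ) := by
    rw [e3, hψ, e4]
    field_simp
    ring
  -- PART 2
  have hEC : ∫ ω, C ω ∂P = μ := by
    have := hcond Set.univ MeasurableSet.univ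
    simpa [Measure.restrict_univ, ← hμ] using this
  have hECd : ∫ ω, C ω * d ω ∂P = ∫ ω, γ (X ω) * d ω ∂P := by
    have hB : MeasurableSet {x | γ x > q} := hγ measurableSet_Ioi
    have hpre : X ⁻¹' {x | γ x > q} = S := rfl
    have key := hcond {x | γ x > q} hB
    rw [hpre] at key
    have l1 : ∫ ω, C ω * d ω ∂P = ∫ ω in S, C ω ∂P := by
      rw [← integral_indicator hSmeas]
      congr 1; funext ω
      by_cases hω : γ (X ω) > q <;>
        simp [Set.indicator, hS, Set.mem_setOf_eq, hd, hω]
    rw [l1, key, e3]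
  have hAmeas : MeasurableSet {ω | C ω ≠ d ω} :=
    (measurableSet_eq_fun hC hdm).compl
  have hPA : (P {ω | C ω ≠ d ω}).toReal
      = ∫ ω, (C ω + d ω - 2 * (C ω * d ω)) ∂P := by
    have : ∫ ω, Set.indicator {ω | C ω ≠ d ω} (fun _ => (1 : ℝ)) ω ∂P
        = (P {ω | C ω ≠ d ω}).toReal := by
      rw [integral_indicator_const (1 : ℝ) hAmeas, smul_eq_mul, mul_one]; rfl
    rw [← this]
    congr 1; funext ω
    rcases hCbin ω with hc | hc <;> by_cases hω : γ (X ω) > q <;>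
      simp [Set.indicator, Set.mem_setOf_eq, hd, hc, hω] <;> norm_num
  have part2 : (P {ω | C ω ≠ d ω}).toReal = 2 * μ * (1 - μ) * (1 - ψ) := by
    rw [hPA]
    have hsum : Integrable (fun ω => C ω + d ω) P := hCint.add hdint
    rw [integral_sub hsum (hCdint.const_mul 2),
      integral_add hCint hdint, integral_const_mul, hEC, hEd, hECd, hψ, e4]
    field_simp
    ring
  exact ⟨part1, part2, part3⟩
end
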